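/- arXiv:2410.21696 — 4 statements merged into one kernel-verified Lean document; each statement's English description precedes it below -/
import Mathlib

section
/- Let N ≥ 2, T ≥ 1, and K ≥ N − 2, and let data points x₁ < x₂ < ⋯ < x_N in ℝ and labels y₁, …, y_N ∈ ℝ^T be given. Then the minimum value of problem (P) equals ∑_{i=1}^{N−2} ‖s_{i+1} − s_i‖₂ (an empty sum when N = 2 or N = 3), and this minimum is attained by a parameter set θ whose network satisfies f_θ(x) = f_D(x) for all x ∈ ℝ. In particular, the connect-the-dots interpolant f_D is always represented by a solution of problem (P). -/
/-!
Shallow univariate (input dimension 1) ReLU networks with `T` outputs,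
width `K`, input weights `w k ∈ {−1, +1}`, and a residual connection.
-/

open scoped BigOperators
open Finset

noncomputable section

/-- Parameters of a width-`K`, `T`-output shallow ReLU network with residual
connection, whose input weights are constrained to `{−1, +1}`. -/
structure ReLUParams (T K : ℕ) where
  v : Fin K → EuclideanSpace ℝ (Fin T)
  w : Fin K → ℝ
  b : Fin K → ℝ
  A : EuclideanSpace ℝ (Fin T)
  c : EuclideanSpace ℝ (Fin T)
  hw : ∀ k, w k = 1 ∨ w k = -1

/-- The network function `f_θ(x) = ∑ₖ vₖ (wₖ x + bₖ)₊ + A x + c`. -/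
def nnFun {T K : ℕ} (θ : ReLUParams T K) (x : ℝ) : EuclideanSpace ℝ (Fin T) :=
  (∑ k : Fin K, max (θ.w k * x + θ.b k) 0 • θ.v k) + x • θ.A + θ.c

/-- The objective of problem (P): `∑ₖ ‖vₖ‖₂`. -/
def cost {T K : ℕ} (θ : ReLUParams T K) : ℝ := ∑ k : Fin K, ‖θ.v k‖

/-- Slope vector `sᵢ = (y_{i+1} − yᵢ)/(x_{i+1} − xᵢ)` (0-indexed). -/
def slopeVec {T : ℕ} (x : ℕ → ℝ) (y : ℕ → EuclideanSpace ℝ (Fin T)) (i : ℕ) :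
    EuclideanSpace ℝ (Fin T) :=
  (x (i + 1) - x i)⁻¹ • (y (i + 1) - y i)

/-- The connect-the-dots interpolant `f_D` of the data
`(x 0, y 0), …, (x (N-1), y (N-1))` (0-indexed): it interpolates the data, is
affine on each interval `[xᵢ, x_{i+1}]`, is affine with slopeVec `s 0` on
`(−∞, x 0]` and affine with slopeVec `s (N-2)` on `[x (N-1), ∞)`. -/
def ctd {T : ℕ} (N : ℕ) (x : ℕ → ℝ) (y : ℕ → EuclideanSpace ℝ (Fin T)) (t : ℝ) :
    EuclideanSpace ℝ (Fin T) :=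
  y 0 + (t - x 0) • slopeVec x y 0 +
    ∑ i ∈ Finset.Ico 1 (N - 1), max (t - x i) 0 • (slopeVec x y i - slopeVec x y (i - 1))

/-- Feasibility for problem (P): the network interpolates the data. -/
def Interpolates {T K : ℕ} (N : ℕ) (x : ℕ → ℝ) (y : ℕ → EuclideanSpace ℝ (Fin T))
    (θ : ReLUParams T K) : Prop :=
  ∀ i < N, nnFun θ (x i) = y i

/-- `θ` attains the minimum of problem (P). -/
def IsMinimizer {T K : ℕ} (N : ℕ) (x : ℕ → ℝ) (y : ℕ → EuclideanSpace ℝ (Fin T))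
    (θ : ReLUParams T K) : Prop :=
  Interpolates N x y θ ∧ ∀ θ' : ReLUParams T K, Interpolates N x y θ' → cost θ ≤ cost θ'

lemma relu_convexOn (w b : ℝ) : ConvexOn ℝ Set.univ (fun t : ℝ => max (w * t + b) 0) := by
  have h1 : ConvexOn ℝ Set.univ (fun t : ℝ => w * t + b) := by
    refine ⟨convex_univ, ?_⟩
    intro p _ q _ a a' ha ha' hab
    simp only [smul_eq_mul]
    apply le_of_eq
    linear_combination b * hab.symm
  have h2 : ConvexOn ℝ Set.univ (fun _ : ℝ => (0:ℝ)) := convexOn_const _ convex_univ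
  exact h1.sup h2

lemma relu_lip (u v : ℝ) : |max u 0 - max v 0| ≤ |u - v| := abs_max_sub_max_le_abs u v 0

lemma x_mono {N : ℕ} {x : ℕ → ℝ} (hx : ∀ i, i + 1 < N → x i < x (i + 1))
    {i j : ℕ} (hij : i ≤ j) (hj : j < N) : x i ≤ x j := by
  induction j, hij using Nat.le_induction with
  | base => exact le_rfl
  | succ n hn ih => exact (ih (by omega)).trans (hx n hj).le


lemma ctd_node {T N : ℕ} (x : ℕ → ℝ) (y : ℕ → EuclideanSpace ℝ (Fin T))
    (hx : ∀ i, i + 1 < N → x i < x (i + 1)) :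
    ∀ j < N, ctd N x y (x j) = y j := by
  intro j
  induction j with
  | zero =>
    intro hj
    simp only [ctd, sub_self, zero_smul, add_zero]
    have hz : ∀ i ∈ Finset.Ico 1 (N - 1),
        max (x 0 - x i) 0 • (slopeVec x y i - slopeVec x y (i - 1)) = 0 := by
      intro i hi
      simp only [Finset.mem_Ico] at hi
      have hle : x 0 ≤ x i := x_mono hx (Nat.zero_le i) (by omega)
      rw [max_eq_right (by linarith), zero_smul]
    rw [Finset.sum_eq_zero hz, add_zero]
  | succ j ih =>
    intro hj
    have hyj := ih (Nat.lt_of_succ_lt hj)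
    have hdpos : 0 < x (j + 1) - x j := sub_pos.2 (hx j hj)
    have h1j : j + 1 ≤ N - 1 := by omega
    have tail : ∀ t : ℝ, (∀ i, j + 1 ≤ i → i < N - 1 → t ≤ x i) →
        ∑ i ∈ Finset.Ico 1 (N - 1), max (t - x i) 0 • (slopeVec x y i - slopeVec x y (i - 1))
          = ∑ i ∈ Finset.Ico 1 (j + 1), max (t - x i) 0 • (slopeVec x y i - slopeVec x y (i - 1)) := by
      intro t ht
      rw [← Finset.sum_Ico_consecutive _ (by omega : 1 ≤ j + 1) h1j]
      have hz : ∑ i ∈ Finset.Ico (j + 1) (N - 1),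
          max (t - x i) 0 • (slopeVec x y i - slopeVec x y (i - 1)) = 0 := by
        apply Finset.sum_eq_zero
        intro i hi
        simp only [Finset.mem_Ico] at hi
        rw [max_eq_right (by linarith [ht i hi.1 hi.2]), zero_smul]
      rw [hz, add_zero]
    have evj : ctd N x y (x j) = y 0 + (x j - x 0) • slopeVec x y 0
        + ∑ i ∈ Finset.Ico 1 (j + 1), (x j - x i) • (slopeVec x y i - slopeVec x y (i - 1)) := by
      simp only [ctd]
      rw [tail (x j) (fun i h1 h2 => x_mono hx (show j ≤ i by omega) (show i < N by omega))]
      congr 1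
      apply Finset.sum_congr rfl
      intro i hi
      simp only [Finset.mem_Ico] at hi
      have hle : x i ≤ x j := x_mono hx (by omega) (by omega)
      rw [max_eq_left (by linarith)]
    have evj1 : ctd N x y (x (j + 1)) = y 0 + (x (j + 1) - x 0) • slopeVec x y 0
        + ∑ i ∈ Finset.Ico 1 (j + 1), (x (j + 1) - x i) • (slopeVec x y i - slopeVec x y (i - 1)) := by
      simp only [ctd]
      rw [tail (x (j + 1)) (fun i h1 h2 => x_mono hx (show j + 1 ≤ i by omega) (show i < N by omega))]
      congr 1
      apply Finset.sum_congr rfl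
      intro i hi
      simp only [Finset.mem_Ico] at hi
      have hle : x i ≤ x (j + 1) := x_mono hx (by omega) (by omega)
      rw [max_eq_left (by linarith)]
    have htel : ∑ i ∈ Finset.Ico 1 (j + 1), (slopeVec x y i - slopeVec x y (i - 1))
        = slopeVec x y j - slopeVec x y 0 := by
      rw [Finset.sum_Ico_eq_sum_range]
      have heq : ∀ k ∈ Finset.range (j + 1 - 1),
          (slopeVec x y (1 + k) - slopeVec x y (1 + k - 1))
            = slopeVec x y (k + 1) - slopeVec x y k := by
        intro k _
        have h1 : 1 + k = k + 1 := Nat.add_comm 1 k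
        have h2 : 1 + k - 1 = k := by omega
        rw [h2, h1]
      rw [Finset.sum_congr rfl heq]
      have : j + 1 - 1 = j := by omega
      rw [this, Finset.sum_range_sub (fun k => slopeVec x y k)]
    have hsum : ∑ i ∈ Finset.Ico 1 (j + 1), (x (j + 1) - x i) • (slopeVec x y i - slopeVec x y (i - 1))
        = (x (j + 1) - x j) • (slopeVec x y j - slopeVec x y 0)
          + ∑ i ∈ Finset.Ico 1 (j + 1), (x j - x i) • (slopeVec x y i - slopeVec x y (i - 1)) := by
      rw [← htel, Finset.smul_sum, ← Finset.sum_add_distrib]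
      apply Finset.sum_congr rfl
      intro i _
      rw [← add_smul]
      congr 1
      ring
    have hfin : (x (j + 1) - x j) • slopeVec x y j = y (j + 1) - y j := by
      simp only [slopeVec]
      rw [smul_inv_smul₀ (ne_of_gt hdpos)]
    rw [evj1, hsum]
    rw [evj] at hyj
    have expand : y 0 + (x (j + 1) - x 0) • slopeVec x y 0 +
        ((x (j + 1) - x j) • (slopeVec x y j - slopeVec x y 0) +
          ∑ i ∈ Finset.Ico 1 (j + 1), (x j - x i) • (slopeVec x y i - slopeVec x y (i - 1)))
        = (y 0 + (x j - x 0) • slopeVec x y 0 +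
            ∑ i ∈ Finset.Ico 1 (j + 1), (x j - x i) • (slopeVec x y i - slopeVec x y (i - 1)))
          + (x (j + 1) - x j) • slopeVec x y j := by
      module
    rw [expand, hyj, hfin]
    abel


lemma lower_bound {T K N : ℕ} (hN : 2 ≤ N) (x : ℕ → ℝ)
    (y : ℕ → EuclideanSpace ℝ (Fin T))
    (hx : ∀ i, i + 1 < N → x i < x (i + 1)) (θ : ReLUParams T K)
    (hθ : Interpolates N x y θ) :
    ∑ i ∈ Finset.Ico 1 (N - 1), ‖slopeVec x y i - slopeVec x y (i - 1)‖ ≤ cost θ := by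
  set r : Fin K → ℝ → ℝ := fun k t => max (θ.w k * t + θ.b k) 0 with hr
  set ρ : Fin K → ℕ → ℝ :=
    fun k i => (x (i + 1) - x i)⁻¹ * (r k (x (i + 1)) - r k (x i)) with hρ
  have hdpos : ∀ i, i + 1 < N → 0 < x (i + 1) - x i := fun i h => sub_pos.2 (hx i h)
  -- Step A: slope vectors decompose through the network
  have stepA : ∀ i, i + 1 < N →
      slopeVec x y i = (∑ k : Fin K, ρ k i • θ.v k) + θ.A := by
    intro i hi
    have h1 := hθ i (by omega)
    have h2 := hθ (i + 1) hi
    have hd := hdpos i hi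
    have hdiff : y (i + 1) - y i
        = (∑ k : Fin K, (r k (x (i + 1)) - r k (x i)) • θ.v k)
          + (x (i + 1) - x i) • θ.A := by
      rw [← h1, ← h2]
      simp only [nnFun, hr, sub_smul]
      rw [Finset.sum_sub_distrib]
      abel
    simp only [slopeVec, hρ]
    rw [hdiff, smul_add, Finset.smul_sum]
    congr 1
    · apply Finset.sum_congr rfl
      intro k _
      rw [smul_smul]
    · rw [smul_smul, inv_mul_cancel₀ (ne_of_gt hd), one_smul]
  -- Step B: second differences decompose
  have stepB : ∀ i ∈ Finset.Ico 1 (N - 1),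
      slopeVec x y i - slopeVec x y (i - 1)
        = ∑ k : Fin K, (ρ k i - ρ k (i - 1)) • θ.v k := by
    intro i hi
    simp only [Finset.mem_Ico] at hi
    have hA := stepA i (by omega)
    have hB := stepA (i - 1) (by omega)
    rw [hA, hB]
    simp only [sub_smul]
    rw [Finset.sum_sub_distrib]
    abel
  -- Step C: slopes of each neuron are monotone (convexity)
  have stepC : ∀ (k : Fin K), ∀ i, 1 ≤ i → i + 1 < N → ρ k (i - 1) ≤ ρ k i := by
    intro k i h1 h2
    have hconv := relu_convexOn (θ.w k) (θ.b k)
    have hab : x (i - 1) < x i := by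
      have := hx (i - 1) (by omega)
      rwa [show i - 1 + 1 = i by omega] at this
    have hbc : x i < x (i + 1) := hx i h2
    have := hconv.slope_mono_adjacent (Set.mem_univ (x (i - 1)))
      (Set.mem_univ (x (i + 1))) hab hbc
    simp only [hρ, hr, show i - 1 + 1 = i by omega]
    rw [inv_mul_eq_div, inv_mul_eq_div]
    exact this
  -- bounds on ρ
  have hρ_bounds : ∀ (k : Fin K), ∀ i, i + 1 < N →
      (θ.w k = 1 → 0 ≤ ρ k i ∧ ρ k i ≤ 1) ∧
      (θ.w k = -1 → -1 ≤ ρ k i ∧ ρ k i ≤ 0) := by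
    intro k i hi
    have hd := hdpos i hi
    have hlip : |r k (x (i + 1)) - r k (x i)|
        ≤ |θ.w k * x (i + 1) + θ.b k - (θ.w k * x i + θ.b k)| := by
      simpa only [hr] using relu_lip (θ.w k * x (i + 1) + θ.b k) (θ.w k * x i + θ.b k)
    have habs : |θ.w k * x (i + 1) + θ.b k - (θ.w k * x i + θ.b k)|
        = |θ.w k| * (x (i + 1) - x i) := by
      rw [show θ.w k * x (i + 1) + θ.b k - (θ.w k * x i + θ.b k)
          = θ.w k * (x (i + 1) - x i) by ring, abs_mul, abs_of_pos hd]
    constructor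
    · intro hw
      have hmono : r k (x i) ≤ r k (x (i + 1)) := by
        simp only [hr, hw, one_mul]
        exact max_le_max (by linarith) le_rfl
      constructor
      · exact mul_nonneg (le_of_lt (inv_pos.2 hd)) (by linarith)
      · have hub : r k (x (i + 1)) - r k (x i) ≤ x (i + 1) - x i := by
          have := hlip
          rw [habs, hw, abs_one, one_mul] at this
          exact (abs_le.1 this).2
        rw [hρ]
        calc (x (i + 1) - x i)⁻¹ * (r k (x (i + 1)) - r k (x i))
            ≤ (x (i + 1) - x i)⁻¹ * (x (i + 1) - x i) :=
              mul_le_mul_of_nonneg_left hub (le_of_lt (inv_pos.2 hd))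
          _ = 1 := inv_mul_cancel₀ (ne_of_gt hd)
    · intro hw
      have hmono : r k (x (i + 1)) ≤ r k (x i) := by
        simp only [hr, hw, neg_one_mul]
        exact max_le_max (by linarith) le_rfl
      constructor
      · have hub : -(x (i + 1) - x i) ≤ r k (x (i + 1)) - r k (x i) := by
          have := hlip
          rw [habs, hw, abs_neg, abs_one, one_mul] at this
          exact (abs_le.1 this).1
        rw [hρ]
        have : (x (i + 1) - x i)⁻¹ * (-(x (i + 1) - x i))
            ≤ (x (i + 1) - x i)⁻¹ * (r k (x (i + 1)) - r k (x i)) :=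
          mul_le_mul_of_nonneg_left hub (le_of_lt (inv_pos.2 hd))
        calc (-1 : ℝ) = (x (i + 1) - x i)⁻¹ * (-(x (i + 1) - x i)) := by
              field_simp
          _ ≤ _ := this
      · exact mul_nonpos_of_nonneg_of_nonpos (le_of_lt (inv_pos.2 hd)) (by linarith)
  -- Step D: telescoping sum of slope increments is at most 1
  have stepD : ∀ k : Fin K,
      ∑ i ∈ Finset.Ico 1 (N - 1), (ρ k i - ρ k (i - 1)) ≤ 1 := by
    intro k
    have htel : ∑ i ∈ Finset.Ico 1 (N - 1), (ρ k i - ρ k (i - 1))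
        = ρ k (N - 2) - ρ k 0 := by
      rw [Finset.sum_Ico_eq_sum_range]
      have heq : ∀ j ∈ Finset.range (N - 1 - 1),
          (ρ k (1 + j) - ρ k (1 + j - 1)) = ρ k (j + 1) - ρ k j := by
        intro j _
        rw [show 1 + j - 1 = j by omega, show 1 + j = j + 1 by omega]
      rw [Finset.sum_congr rfl heq, Finset.sum_range_sub (fun j => ρ k j),
        show N - 1 - 1 = N - 2 by omega]
    rw [htel]
    have h1 : N - 2 + 1 < N := by omega
    have h2 : 0 + 1 < N := by omega
    have b1 := hρ_bounds k (N - 2) h1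
    have b2 := hρ_bounds k 0 h2
    rcases θ.hw k with hw | hw
    · have := (b1.1 hw).2
      have := (b2.1 hw).1
      linarith
    · have := (b1.2 hw).2
      have := (b2.2 hw).1
      linarith
  -- put it together
  calc ∑ i ∈ Finset.Ico 1 (N - 1), ‖slopeVec x y i - slopeVec x y (i - 1)‖
      ≤ ∑ i ∈ Finset.Ico 1 (N - 1), ∑ k : Fin K, (ρ k i - ρ k (i - 1)) * ‖θ.v k‖ := by
        apply Finset.sum_le_sum
        intro i hi
        rw [stepB i hi]
        refine (norm_sum_le _ _).trans ?_
        apply Finset.sum_le_sum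
        intro k _
        rw [norm_smul, Real.norm_eq_abs]
        have hmem := Finset.mem_Ico.1 hi
        rw [abs_of_nonneg (sub_nonneg.2 (stepC k i (by omega) (by omega)))]
    _ = ∑ k : Fin K, (∑ i ∈ Finset.Ico 1 (N - 1), (ρ k i - ρ k (i - 1))) * ‖θ.v k‖ := by
        rw [Finset.sum_comm]
        apply Finset.sum_congr rfl
        intro k _
        rw [Finset.sum_mul]
    _ ≤ ∑ k : Fin K, 1 * ‖θ.v k‖ := by
        apply Finset.sum_le_sum
        intro k _
        exact mul_le_mul_of_nonneg_right (stepD k) (norm_nonneg _)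
    _ = cost θ := by simp [cost]


/-- The minimum of problem (P) equals
`∑_{i=1}^{N-2} ‖s_{i+1} − s_i‖₂` (here 0-indexed as `∑_{i ∈ [1, N-1)} ‖sᵢ − s_{i-1}‖₂`),
and it is attained by a parameter set `θ` whose network represents the
connect-the-dots interpolant `f_D`. -/
theorem ctd_is_solution {T K N : ℕ} (hT : 1 ≤ T) (hN : 2 ≤ N) (hK : N - 2 ≤ K)
    (x : ℕ → ℝ) (y : ℕ → EuclideanSpace ℝ (Fin T))
    (hx : ∀ i, i + 1 < N → x i < x (i + 1)) :
    ∃ θ : ReLUParams T K,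
      IsMinimizer N x y θ ∧
      (∀ t : ℝ, nnFun θ t = ctd N x y t) ∧
      cost θ = ∑ i ∈ Finset.Ico 1 (N - 1), ‖slopeVec x y i - slopeVec x y (i - 1)‖ := by
  classical
  set θ₀ : ReLUParams T K :=
    { v := fun k => if (k : ℕ) < N - 2 then
          slopeVec x y ((k : ℕ) + 1) - slopeVec x y (k : ℕ) else 0
      w := fun _ => 1
      b := fun k => -(x ((k : ℕ) + 1))
      A := slopeVec x y 0
      c := y 0 - x 0 • slopeVec x y 0
      hw := fun _ => Or.inl rfl } with hθ₀
  have hzero : ∀ j ∈ Finset.range K, j ∉ Finset.range (N - 2) →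
      (if j < N - 2 then slopeVec x y (j + 1) - slopeVec x y j else 0) = 0 := by
    intro j _ hj
    rw [if_neg (by simpa using hj)]
  have hsub : Finset.range (N - 2) ⊆ Finset.range K := Finset.range_subset_range.2 hK
  have hsum : ∀ t : ℝ, (∑ k : Fin K, max (θ₀.w k * t + θ₀.b k) 0 • θ₀.v k)
      = ∑ i ∈ Finset.Ico 1 (N - 1),
          max (t - x i) 0 • (slopeVec x y i - slopeVec x y (i - 1)) := by
    intro t
    have h1 : (∑ k : Fin K, max (θ₀.w k * t + θ₀.b k) 0 • θ₀.v k)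
        = ∑ j ∈ Finset.range K, max (t - x (j + 1)) 0 •
            (if j < N - 2 then slopeVec x y (j + 1) - slopeVec x y j else 0) := by
      rw [← Fin.sum_univ_eq_sum_range (fun j => max (t - x (j + 1)) 0 •
            (if j < N - 2 then slopeVec x y (j + 1) - slopeVec x y j else 0)) K]
      apply Finset.sum_congr rfl
      intro k _
      simp only [hθ₀, one_mul, ← sub_eq_add_neg]
    have h2 := Finset.sum_subset hsub
      (fun j hj hj2 => by rw [hzero j hj hj2, smul_zero]
        : ∀ j ∈ Finset.range K, j ∉ Finset.range (N - 2) →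
          max (t - x (j + 1)) 0 •
            (if j < N - 2 then slopeVec x y (j + 1) - slopeVec x y j else 0) = 0)
    rw [h1, ← h2]
    rw [Finset.sum_Ico_eq_sum_range, show N - 1 - 1 = N - 2 by omega]
    apply Finset.sum_congr rfl
    intro j hj
    rw [if_pos (Finset.mem_range.1 hj), show 1 + j - 1 = j by omega,
      show 1 + j = j + 1 by omega]
  have hfun : ∀ t : ℝ, nnFun θ₀ t = ctd N x y t := by
    intro t
    simp only [nnFun]
    rw [hsum t]
    simp only [hθ₀, ctd]
    module
  have hcost : cost θ₀
      = ∑ i ∈ Finset.Ico 1 (N - 1), ‖slopeVec x y i - slopeVec x y (i - 1)‖ := by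
    have h1 : cost θ₀ = ∑ j ∈ Finset.range K,
        ‖if j < N - 2 then slopeVec x y (j + 1) - slopeVec x y j else 0‖ := by
      simp only [cost]
      rw [← Fin.sum_univ_eq_sum_range (fun j =>
        ‖if j < N - 2 then slopeVec x y (j + 1) - slopeVec x y j else 0‖) K]
    have h2 := Finset.sum_subset hsub
      (fun j hj hj2 => by rw [hzero j hj hj2, norm_zero]
        : ∀ j ∈ Finset.range K, j ∉ Finset.range (N - 2) →
          ‖if j < N - 2 then slopeVec x y (j + 1) - slopeVec x y j else 0‖ = 0)
    rw [h1, ← h2]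
    rw [Finset.sum_Ico_eq_sum_range, show N - 1 - 1 = N - 2 by omega]
    apply Finset.sum_congr rfl
    intro j hj
    rw [if_pos (Finset.mem_range.1 hj), show 1 + j - 1 = j by omega,
      show 1 + j = j + 1 by omega]
  have hint : Interpolates N x y θ₀ := by
    intro i hi
    rw [hfun (x i)]
    exact ctd_node x y hx i hi
  refine ⟨θ₀, ⟨hint, ?_⟩, hfun, hcost⟩
  intro θ' hθ'
  rw [hcost]
  exact lower_bound hN x y hx θ' hθ'

end
end

section
/- Let g : ℝ → ℝ^T be continuous and piecewise affine with exactly J knot locations t₁ < ⋯ < t_J (the points where the derivative of some output of g jumps) and slope-change vectors μ₁, …, μ_J ∈ ℝ^T, each nonzero, where μ_j is the vector of jumps at t_j of the derivatives of the T outputs of g. Then for every K ≥ J, the infimum of ∑_{k=1}^K ‖v_k‖₂ over all width-K parameter sets θ with w_k ∈ {−1, +1} for all k and f_θ(x) = g(x) for all x ∈ ℝ equals ∑_{j=1}^J ‖μ_j‖₂, and this infimum is attained. -/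
/-!
Shallow univariate (input dimension 1) ReLU networks with `T` outputs,
width `K`, input weights `w k ∈ {−1, +1}`, and a residual connection.
-/

open scoped BigOperators
open Finset

noncomputable section

lemma relu_sd_kink (w b ε q : ℝ) (hw : w = 1 ∨ w = -1) (hε : 0 ≤ ε)
    (h : w * q + b = 0) :
    max (w * (q + ε) + b) 0 + max (w * (q - ε) + b) 0 - 2 * max (w * q + b) 0 = ε := by
  rcases hw with rfl | rfl <;> simp [max_def] <;> split_ifs <;> linarith

lemma relu_sd_far (w b ε q : ℝ) (hw : w = 1 ∨ w = -1) (hε : 0 < ε)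
    (h : ε < |q + w * b|) :
    max (w * (q + ε) + b) 0 + max (w * (q - ε) + b) 0 - 2 * max (w * q + b) 0 = 0 := by
  rcases hw with rfl | rfl <;> rcases lt_abs.mp h with h' | h' <;>
    simp [max_def] <;> split_ifs <;> (try push_neg at *) <;> linarith

lemma kink_iff (w b q : ℝ) (hw : w = 1 ∨ w = -1) : w * q + b = 0 ↔ q = -(w * b) := by
  rcases hw with rfl | rfl <;> constructor <;> intro h <;> linarith

lemma exists_eps (a : ℝ) (F : Finset ℝ) (hF : a ∉ F) : ∃ ε > 0, ∀ r ∈ F, ε < |a - r| := by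
  classical
  set G := insert (1:ℝ) (F.image fun r => |a - r|) with hG
  have hne : G.Nonempty := ⟨1, Finset.mem_insert_self _ _⟩
  have hpos : 0 < G.min' hne := by
    have hm := G.min'_mem hne
    rcases Finset.mem_insert.mp hm with h | h
    · rw [h]; norm_num
    · obtain ⟨r, hr, hr2⟩ := Finset.mem_image.mp h
      rw [← hr2, abs_pos, sub_ne_zero]
      rintro rfl; exact hF hr
  refine ⟨G.min' hne / 2, by linarith, fun r hr => ?_⟩
  have h1 : G.min' hne ≤ |a - r| :=
    Finset.min'_le _ _ (Finset.mem_insert_of_mem (Finset.mem_image_of_mem _ hr))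
  linarith

lemma sd_sum {E : Type*} [AddCommGroup E] [Module ℝ E] {ι : Type*}
    (s : Finset ι) (a b c : ι → ℝ) (v : ι → E) :
    (∑ i ∈ s, a i • v i) + (∑ i ∈ s, b i • v i) - (2:ℝ) • ∑ i ∈ s, c i • v i
      = ∑ i ∈ s, (a i + b i - 2 * c i) • v i := by
  rw [Finset.smul_sum, ← Finset.sum_add_distrib, ← Finset.sum_sub_distrib]
  refine Finset.sum_congr rfl fun i _ => ?_
  module

lemma Dcalc {E : Type*} [AddCommGroup E] [Module ℝ E] {ι : Type*} [DecidableEq ι]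
    (s : Finset ι) (w b : ι → ℝ) (v : ι → E) (A c : E)
    (hw : ∀ i ∈ s, w i = 1 ∨ w i = -1) (q ε : ℝ) (hε : 0 < ε)
    (hfar : ∀ i ∈ s, ¬ (w i * q + b i = 0) → ε < |q + w i * b i|)
    (f : ℝ → E)
    (hf : ∀ x, f x = (∑ i ∈ s, max (w i * x + b i) 0 • v i) + x • A + c) :
    f (q + ε) + f (q - ε) - (2:ℝ) • f q
      = ε • ∑ i ∈ s.filter (fun i => w i * q + b i = 0), v i := by
  classical
  have h1 : f (q + ε) + f (q - ε) - (2:ℝ) • f q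
      = ((∑ i ∈ s, max (w i * (q+ε) + b i) 0 • v i)
        + (∑ i ∈ s, max (w i * (q-ε) + b i) 0 • v i)
        - (2:ℝ) • ∑ i ∈ s, max (w i * q + b i) 0 • v i)
        + (((q+ε) • A + (q-ε) • A - (2:ℝ) • (q • A)) + (c + c - (2:ℝ) • c)) := by
    rw [hf, hf, hf]; module
  have h2 : (q+ε) • A + (q-ε) • A - (2:ℝ) • (q • A) = 0 := by module
  have h3 : c + c - (2:ℝ) • c = (0:E) := by module
  rw [h1, h2, h3, add_zero, add_zero, sd_sum]
  have h4 : ∀ i ∈ s,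
      (max (w i * (q+ε) + b i) 0 + max (w i * (q-ε) + b i) 0 - 2 * max (w i * q + b i) 0) • v i
      = (if w i * q + b i = 0 then ε • v i else 0) := by
    intro i hi
    by_cases h : w i * q + b i = 0
    · rw [if_pos h, relu_sd_kink _ _ _ _ (hw i hi) hε.le h]
    · rw [if_neg h, relu_sd_far _ _ _ _ (hw i hi) hε (hfar i hi h), zero_smul]
  rw [Finset.sum_congr rfl h4, ← Finset.sum_filter, ← Finset.smul_sum]

/-- Let `g : ℝ → ℝ^T` be continuous piecewise affine with
exactly `J` knot locations `t 0 < ⋯ < t (J−1)` and nonzero slope-change vectors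
`μ 0, …, μ (J−1)`; i.e. `g x = x • m + c + ∑_{j<J} (x − t j)₊ • μ j` for some
`m, c`. Then for every `K ≥ J`, the infimum of `∑ₖ ‖vₖ‖₂` over all width-`K`
parameter sets `θ` (with `wₖ ∈ {−1, +1}`) representing `g` equals
`∑_{j<J} ‖μ j‖₂`, and this infimum is attained. -/
theorem cpwl_representational_cost {T J K : ℕ} (hT : 1 ≤ T) (hK : J ≤ K)
    (t : ℕ → ℝ) (ht : ∀ j, j + 1 < J → t j < t (j + 1))
    (μ : ℕ → EuclideanSpace ℝ (Fin T)) (hμ : ∀ j < J, μ j ≠ 0)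
    (g : ℝ → EuclideanSpace ℝ (Fin T))
    (m c : EuclideanSpace ℝ (Fin T))
    (hg : ∀ x : ℝ, g x = x • m + c + ∑ j ∈ Finset.range J, max (x - t j) 0 • μ j) :
    (∃ θ : ReLUParams T K, (∀ x : ℝ, nnFun θ x = g x) ∧
        cost θ = ∑ j ∈ Finset.range J, ‖μ j‖) ∧
    (∀ θ : ReLUParams T K, (∀ x : ℝ, nnFun θ x = g x) →
        ∑ j ∈ Finset.range J, ‖μ j‖ ≤ cost θ) := by
  classical
  constructor
  · -- existence
    refine ⟨⟨fun k => if (k:ℕ) < J then μ k else 0, fun _ => 1, fun k => -(t (k:ℕ)),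
        m, c, fun _ => Or.inl rfl⟩, ?_, ?_⟩
    · intro x
      rw [nnFun, hg]
      dsimp only
      have hsum : ∑ k : Fin K, max (1 * x + -(t (k:ℕ))) 0 • (if (k:ℕ) < J then μ k else 0)
          = ∑ j ∈ Finset.range J, max (x - t j) 0 • μ j := by
        rw [Fin.sum_univ_eq_sum_range (fun i => max (1 * x + -(t i)) 0 • (if i < J then μ i else 0)) K]
        rw [← Finset.sum_subset (Finset.range_subset_range.mpr hK)]
        · refine Finset.sum_congr rfl fun i hi => ?_
          rw [if_pos (Finset.mem_range.mp hi)]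
          have : 1 * x + -(t i) = x - t i := by ring
          rw [this]
        · intro i _ hi
          rw [if_neg (fun h => hi (Finset.mem_range.mpr h)), smul_zero]
      rw [hsum]; abel
    · rw [cost]
      dsimp only
      rw [Fin.sum_univ_eq_sum_range (fun i => ‖if i < J then μ i else 0‖) K]
      rw [← Finset.sum_subset (Finset.range_subset_range.mpr hK)]
      · exact Finset.sum_congr rfl fun i hi => by rw [if_pos (Finset.mem_range.mp hi)]
      · intro i _ hi
        rw [if_neg (fun h => hi (Finset.mem_range.mpr h)), norm_zero]
  · -- lower bound
    intro θ hθ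
    have hmono : ∀ j < J, ∀ i < j, t i < t j := by
      intro j hj
      induction j with
      | zero => intro i hi; omega
      | succ n ih =>
        intro i hi
        have hn : t n < t (n + 1) := ht n hj
        rcases Nat.lt_succ_iff_lt_or_eq.mp hi with h | rfl
        · exact (ih (by omega) i h).trans hn
        · exact hn
    have htne : ∀ i < J, ∀ j < J, i ≠ j → t i ≠ t j := by
      intro i hi j hj hij
      rcases lt_or_gt_of_ne hij with h | h
      · exact ne_of_lt (hmono j hj i h)
      · exact (ne_of_lt (hmono i hi j h)).symm
    set Afil : ℕ → Finset (Fin K) :=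
      fun j => Finset.univ.filter (fun k => θ.w k * t j + θ.b k = 0) with hAfil
    have claim : ∀ j₀ < J, μ j₀ = ∑ k ∈ Afil j₀, θ.v k := by
      intro j₀ hj₀
      set F : Finset ℝ :=
        (((Finset.range J).image t) ∪
          (Finset.univ.image (fun k : Fin K => -(θ.w k * θ.b k)))).erase (t j₀) with hF
      obtain ⟨ε, hε, hεF⟩ := exists_eps (t j₀) F (Finset.notMem_erase _ _)
      have hfarg : ∀ j ∈ Finset.range J, ¬ ((1:ℝ) * t j₀ + -(t j) = 0) →
          ε < |t j₀ + 1 * -(t j)| := by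
        intro j hj hne
        have h1 : t j ≠ t j₀ := fun h => hne (by rw [h]; ring)
        have h2 : t j ∈ F := Finset.mem_erase.mpr
          ⟨h1, Finset.mem_union_left _ (Finset.mem_image_of_mem _ hj)⟩
        have := hεF _ h2
        have he : t j₀ + 1 * -(t j) = t j₀ - t j := by ring
        rwa [he]
      have hfg : ∀ x : ℝ, g x
          = (∑ j ∈ Finset.range J, max ((1:ℝ) * x + -(t j)) 0 • μ j) + x • m + c := by
        intro x
        rw [hg]
        have : ∀ j ∈ Finset.range J,
            max (x - t j) 0 • μ j = max ((1:ℝ) * x + -(t j)) 0 • μ j := by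
          intro j _
          have : x - t j = 1 * x + -(t j) := by ring
          rw [this]
        rw [Finset.sum_congr rfl this]; abel
      have hDg := Dcalc (Finset.range J) (fun _ => (1:ℝ)) (fun j => -(t j)) μ m c
        (fun _ _ => Or.inl rfl) (t j₀) ε hε hfarg g hfg
      have hfarθ : ∀ k ∈ (Finset.univ : Finset (Fin K)),
          ¬ (θ.w k * t j₀ + θ.b k = 0) → ε < |t j₀ + θ.w k * θ.b k| := by
        intro k _ hne
        have h1 : t j₀ ≠ -(θ.w k * θ.b k) := fun h => hne ((kink_iff _ _ _ (θ.hw k)).mpr h)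
        have h2 : -(θ.w k * θ.b k) ∈ F := Finset.mem_erase.mpr
          ⟨fun h => h1 h.symm, Finset.mem_union_right _ (Finset.mem_image_of_mem _ (Finset.mem_univ k))⟩
        have := hεF _ h2
        rwa [sub_neg_eq_add] at this
      have hDθ := Dcalc Finset.univ θ.w θ.b θ.v θ.A θ.c (fun k _ => θ.hw k) (t j₀) ε hε
        hfarθ (nnFun θ) (fun x => rfl)
      have hfil : (Finset.range J).filter (fun j => (1:ℝ) * t j₀ + -(t j) = 0) = {j₀} := by
        ext j
        simp only [Finset.mem_filter, Finset.mem_range, Finset.mem_singleton]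
        constructor
        · rintro ⟨hj, he⟩
          by_contra hne
          exact htne j hj j₀ hj₀ hne (by linarith)
        · rintro rfl
          exact ⟨hj₀, by ring⟩
      rw [hfil, Finset.sum_singleton] at hDg
      have heq : ε • ∑ k ∈ Afil j₀, θ.v k = ε • μ j₀ := by
        rw [← hDg, ← hDθ]
        simp only [hθ]
      have := smul_right_injective (EuclideanSpace ℝ (Fin T)) (ne_of_gt hε) heq
      exact this.symm
    have hdisj : (↑(Finset.range J) : Set ℕ).PairwiseDisjoint Afil := by
      intro i hi j hj hij
      simp only [Finset.mem_coe, Finset.mem_range] at hi hj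
      refine Finset.disjoint_left.mpr fun k hki hkj => ?_
      simp only [hAfil, Finset.mem_filter, Finset.mem_univ, true_and] at hki hkj
      have hw0 : θ.w k ≠ 0 := by rcases θ.hw k with h | h <;> rw [h] <;> norm_num
      have : t i = t j := by
        have h := sub_eq_zero.mpr (hki.trans hkj.symm)
        have h2 : θ.w k * (t i - t j) = 0 := by ring_nf; ring_nf at h; linarith
        rcases mul_eq_zero.mp h2 with h3 | h3
        · exact absurd h3 hw0
        · linarith [sub_eq_zero.mp h3]
      exact htne i hi j hj hij this
    calc ∑ j ∈ Finset.range J, ‖μ j‖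
        ≤ ∑ j ∈ Finset.range J, ∑ k ∈ Afil j, ‖θ.v k‖ := by
          refine Finset.sum_le_sum fun j hj => ?_
          rw [claim j (Finset.mem_range.mp hj)]
          exact norm_sum_le _ _
      _ = ∑ k ∈ (Finset.range J).biUnion Afil, ‖θ.v k‖ := (Finset.sum_biUnion hdisj).symm
      _ ≤ ∑ k : Fin K, ‖θ.v k‖ :=
          Finset.sum_le_sum_of_subset_of_nonneg (Finset.subset_univ _)
            (fun _ _ _ => norm_nonneg _)
      _ = cost θ := rfl


end
end

section
/- Let N ≥ 2, T ≥ 1, and K ≥ N − 2, and let data points x₁ < x₂ < ⋯ < x_N in ℝ and labels y₁, …, y_N ∈ ℝ^T be given. Suppose that for every i ∈ {2, …, N−2} it is NOT the case that the vectors s_i − s_{i−1} and s_{i+1} − s_i are both nonzero and aligned. Then every parameter set θ attaining the minimum of problem (P) satisfies f_θ(x) = f_D(x) for all x ∈ ℝ; that is, the connect-the-dots interpolant is the unique function represented by solutions of problem (P). -/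
/-!
Shallow univariate (input dimension 1) ReLU networks with `T` outputs,
width `K`, input weights `w k ∈ {−1, +1}`, and a residual connection.
-/

open scoped BigOperators
open Finset

noncomputable section

/-- Two vectors `u₁, u₂ ∈ ℝ^T` are aligned if `⟪u₁, u₂⟫ = ‖u₁‖₂ ‖u₂‖₂`. -/
def Aligned {T : ℕ} (u₁ u₂ : EuclideanSpace ℝ (Fin T)) : Prop :=
  (inner ℝ u₁ u₂ : ℝ) = ‖u₁‖ * ‖u₂‖


/-! ### Auxiliary development for the proof -/


namespace CtdAux

/-- relu difference is nonneg -/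
lemma relu_mono {a b : ℝ} (h : a ≤ b) : max a 0 ≤ max b 0 :=
  max_le_max h le_rfl

lemma relu_lip {a b : ℝ} (h : a ≤ b) : max b 0 - max a 0 ≤ b - a := by
  rcases le_total a 0 with ha | ha <;> rcases le_total b 0 with hb | hb <;>
    simp [max_eq_left, max_eq_right, *] <;> linarith

lemma relu_secant {a b c d : ℝ} (hab : a ≤ b) (hbc : b ≤ c) (hcd : c ≤ d) :
    (max b 0 - max a 0) * (d - c) ≤ (max d 0 - max c 0) * (b - a) := by
  rcases le_or_gt b 0 with hb | hb
  · have h1 : max b 0 = 0 := max_eq_right hb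
    have h2 : max a 0 = 0 := max_eq_right (hab.trans hb)
    rw [h1, h2]
    have := relu_mono hcd
    nlinarith
  · have hc : (0:ℝ) < c := lt_of_lt_of_le hb hbc
    have hd : (0:ℝ) < d := lt_of_lt_of_le hc hcd
    rw [max_eq_left hc.le, max_eq_left hd.le]
    have h1 : max b 0 - max a 0 ≤ b - a := relu_lip hab
    have h2 : 0 ≤ max b 0 - max a 0 := sub_nonneg.2 (relu_mono hab)
    nlinarith

lemma relu_diff_eq_zero {a b : ℝ} (hab : a < b) (h : max b 0 - max a 0 = 0) : b ≤ 0 := by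
  by_contra hb
  push_neg at hb
  have : max a 0 < max b 0 := by
    rw [max_eq_left hb.le]
    exact max_lt hab hb
  linarith

lemma relu_diff_eq_full {a b : ℝ} (hab : a < b) (h : max b 0 - max a 0 = b - a) : 0 ≤ a := by
  by_contra ha
  push_neg at ha
  rw [max_eq_right ha.le] at h
  have hb : max b 0 < b - a := by
    rcases le_total b 0 with hb | hb
    · rw [max_eq_right hb]; linarith
    · rw [max_eq_left hb]; linarith
  linarith

/-- `Gam x r i` : fraction of interval `[x i, x (i+1)]` on which a `w = 1` neuron
with bias `r` is active. -/
def Gam (x : ℕ → ℝ) (r : ℝ) (i : ℕ) : ℝ :=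
  (max (x (i + 1) + r) 0 - max (x i + r) 0) / (x (i + 1) - x i)

section XMono

variable {N : ℕ} {x : ℕ → ℝ}

lemma xmono (hx : ∀ i, i + 1 < N → x i < x (i + 1)) :
    ∀ i j, i ≤ j → j < N → x i ≤ x j := by
  intro i j hij hj
  induction j with
  | zero => simp_all
  | succ n ih =>
    rcases Nat.lt_or_ge i (n+1) with h | h
    · have : x i ≤ x n := ih (by omega) (by omega)
      exact this.trans (hx n hj).le
    · have : i = n + 1 := le_antisymm hij h
      simp [this]

lemma xstrict (hx : ∀ i, i + 1 < N → x i < x (i + 1)) :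
    ∀ i j, i < j → j < N → x i < x j := by
  intro i j hij hj
  have h1 : x i ≤ x (j - 1) := xmono hx i (j-1) (by omega) (by omega)
  have h2 : x (j - 1) < x (j - 1 + 1) := hx _ (by omega)
  have : j - 1 + 1 = j := by omega
  rw [this] at h2
  linarith

lemma Lpos (hx : ∀ i, i + 1 < N → x i < x (i + 1)) {i : ℕ} (hi : i + 1 < N) :
    0 < x (i + 1) - x i := sub_pos.2 (hx i hi)

variable (hx : ∀ i, i + 1 < N → x i < x (i + 1))
include hx

lemma Gam_nonneg {r : ℝ} {i : ℕ} (hi : i + 1 < N) : 0 ≤ Gam x r i :=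
  div_nonneg (sub_nonneg.2 (relu_mono (by have := hx i hi; linarith))) (Lpos hx hi).le

lemma Gam_le_one {r : ℝ} {i : ℕ} (hi : i + 1 < N) : Gam x r i ≤ 1 := by
  rw [Gam, div_le_one (Lpos hx hi)]
  have := relu_lip (a := x i + r) (b := x (i+1) + r) (by have := hx i hi; linarith)
  linarith

lemma Gam_adj {r : ℝ} {i : ℕ} (hi : i + 2 < N) : Gam x r i ≤ Gam x r (i + 1) := by
  have L1 : 0 < x (i + 1) - x i := Lpos hx (by omega)
  have L2 : 0 < x (i + 2) - x (i + 1) := Lpos hx (by omega)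
  rw [Gam, Gam, div_le_div_iff₀ L1 L2]
  have := relu_secant (a := x i + r) (b := x (i+1) + r) (c := x (i+1) + r) (d := x (i+2) + r)
    (by have := hx i (by omega); linarith) le_rfl (by have := hx (i+1) (by omega); linarith)
  calc (max (x (i + 1) + r) 0 - max (x i + r) 0) * (x (i + 2) - x (i + 1))
      = (max (x (i + 1) + r) 0 - max (x i + r) 0) * ((x (i+2) + r) - (x (i+1) + r)) := by ring_nf
    _ ≤ (max (x (i + 2) + r) 0 - max (x (i + 1) + r) 0) * ((x (i+1) + r) - (x i + r)) := this
    _ = (max (x (i + 1 + 1) + r) 0 - max (x (i + 1) + r) 0) * (x (i + 1) - x i) := by ring_nf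
  
lemma Gam_pos_arg {r : ℝ} {i : ℕ} (hi : i + 1 < N) (h : 0 < Gam x r i) :
    0 < x (i + 1) + r := by
  by_contra hc
  push_neg at hc
  have h2 : max (x (i+1) + r) 0 = 0 := max_eq_right hc
  have h1 : max (x i + r) 0 = 0 := max_eq_right (by have := hx i hi; linarith)
  rw [Gam, h1, h2] at h
  simp at h

lemma Gam_lt_one_arg {r : ℝ} {i : ℕ} (hi : i + 1 < N) (h : Gam x r i < 1) :
    x i + r < 0 := by
  by_contra hc
  push_neg at hc
  have h1 : max (x i + r) 0 = x i + r := max_eq_left hc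
  have h2 : max (x (i+1) + r) 0 = x (i+1) + r :=
    max_eq_left (by have := hx i hi; linarith)
  rw [Gam, h1, h2] at h
  have : (x (i + 1) + r - (x i + r)) / (x (i + 1) - x i) = 1 := by
    rw [div_eq_one_iff_eq (Lpos hx hi).ne']
    ring
  rw [this] at h
  exact lt_irrefl _ h

lemma Gam_eq_one_arg {r : ℝ} {i : ℕ} (hi : i + 1 < N) (h : Gam x r i = 1) :
    0 ≤ x i + r := by
  rw [Gam, div_eq_one_iff_eq (Lpos hx hi).ne'] at h
  have := relu_diff_eq_full (a := x i + r) (b := x (i+1) + r)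
    (by have := hx i hi; linarith) (by linarith)
  exact this

lemma Gam_eq_zero_arg {r : ℝ} {i : ℕ} (hi : i + 1 < N) (h : Gam x r i = 0) :
    x (i + 1) + r ≤ 0 := by
  rw [Gam, div_eq_zero_iff] at h
  rcases h with h | h
  · exact relu_diff_eq_zero (by have := hx i hi; linarith) h
  · exact absurd h (Lpos hx hi).ne'

end XMono

end CtdAux

open scoped InnerProductSpace

namespace CtdAux

section Vec

variable {T K N : ℕ}

/-- second difference of slopes -/
def del (x : ℕ → ℝ) (y : ℕ → EuclideanSpace ℝ (Fin T)) (i : ℕ) :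
    EuclideanSpace ℝ (Fin T) :=
  slopeVec x y i - slopeVec x y (i - 1)

def uvec (x : ℕ → ℝ) (y : ℕ → EuclideanSpace ℝ (Fin T)) (i : ℕ) :
    EuclideanSpace ℝ (Fin T) :=
  ‖del x y i‖⁻¹ • del x y i

def betaG (x : ℕ → ℝ) (r : ℝ) (i : ℕ) : ℝ := Gam x r i - Gam x r (i - 1)

def Bvec (N : ℕ) (x : ℕ → ℝ) (y : ℕ → EuclideanSpace ℝ (Fin T))
    (θ : ReLUParams T K) (k : Fin K) : EuclideanSpace ℝ (Fin T) :=
  ∑ i ∈ Finset.Ico 1 (N - 1), betaG x (θ.w k * θ.b k) i • uvec x y i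

variable {x : ℕ → ℝ} {y : ℕ → EuclideanSpace ℝ (Fin T)} {θ : ReLUParams T K}

lemma norm_uvec_le (i : ℕ) : ‖uvec x y i‖ ≤ 1 := by
  rw [uvec]
  by_cases h : del x y i = 0
  · simp [h]
  · rw [norm_smul, norm_inv, norm_norm, inv_mul_cancel₀ (norm_ne_zero_iff.2 h)]

lemma inner_u_del (i : ℕ) : ⟪uvec x y i, del x y i⟫_ℝ = ‖del x y i‖ := by
  rw [uvec]
  by_cases h : del x y i = 0
  · simp [h]
  · rw [real_inner_smul_left, real_inner_self_eq_norm_sq]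
    field_simp [norm_ne_zero_iff.2 h]

lemma del_eq_norm_smul_uvec {i : ℕ} (h : del x y i ≠ 0) :
    del x y i = ‖del x y i‖ • uvec x y i := by
  rw [uvec, smul_smul, mul_inv_cancel₀ (norm_ne_zero_iff.2 h), one_smul]

variable (hx : ∀ i, i + 1 < N → x i < x (i + 1))
include hx

lemma slope_eq (hint : Interpolates N x y θ) {i : ℕ} (hi : i + 1 < N) :
    slopeVec x y i =
      (∑ k : Fin K, ((max (θ.w k * x (i+1) + θ.b k) 0 - max (θ.w k * x i + θ.b k) 0)
        / (x (i+1) - x i)) • θ.v k) + θ.A := by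
  have hL : x (i+1) - x i ≠ 0 := (Lpos hx hi).ne'
  have hy : y (i + 1) - y i =
      (∑ k : Fin K, (max (θ.w k * x (i+1) + θ.b k) 0 - max (θ.w k * x i + θ.b k) 0) • θ.v k)
        + (x (i+1) - x i) • θ.A := by
    have expand : ∀ k : Fin K,
        (max (θ.w k * x (i+1) + θ.b k) 0 - max (θ.w k * x i + θ.b k) 0) • θ.v k
          = (max (θ.w k * x (i+1) + θ.b k) 0) • θ.v k - (max (θ.w k * x i + θ.b k) 0) • θ.v k :=
      fun k => sub_smul _ _ _
    rw [← hint (i+1) hi, ← hint i (by omega)]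
    simp only [nnFun]
    rw [Finset.sum_congr rfl (fun k _ => expand k), Finset.sum_sub_distrib, sub_smul]
    abel
  rw [slopeVec, hy, smul_add, Finset.smul_sum]
  congr 1
  · refine Finset.sum_congr rfl fun k _ => ?_
    rw [smul_smul, ← div_eq_inv_mul]
  · rw [smul_smul, inv_mul_cancel₀ hL, one_smul]

lemma gam_neg {i : ℕ} (hi : i + 1 < N) (b : ℝ) :
    (max (-1 * x (i+1) + b) 0 - max (-1 * x i + b) 0) / (x (i+1) - x i)
      = Gam x (-b) i - 1 := by
  have key : ∀ t : ℝ, max (-1 * t + b) 0 = max (t + -b) 0 - (t + -b) := by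
    intro t
    rcases le_total (t + -b) 0 with h | h
    · rw [max_eq_right h, max_eq_left (by linarith)]; ring
    · rw [max_eq_left h, max_eq_right (by linarith)]; ring
  have hL : x (i+1) - x i ≠ 0 := (Lpos hx hi).ne'
  rw [key, key, Gam]
  field_simp
  ring

lemma delta_eq (hint : Interpolates N x y θ) {i : ℕ} (hi1 : 1 ≤ i) (hi : i + 1 < N) :
    del x y i = ∑ k : Fin K, betaG x (θ.w k * θ.b k) i • θ.v k := by
  have hii : i - 1 + 1 = i := by omega
  have e1 := slope_eq hx hint hi
  have e0 := slope_eq hx hint (i := i - 1) (by omega)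
  rw [hii] at e0
  rw [del, e1, e0]
  have : ∀ (S₁ S₀ : EuclideanSpace ℝ (Fin T)) (A : EuclideanSpace ℝ (Fin T)),
      (S₁ + A) - (S₀ + A) = S₁ - S₀ := by intro S₁ S₀ A; abel
  rw [this, ← Finset.sum_sub_distrib]
  refine Finset.sum_congr rfl fun k _ => ?_
  rw [← sub_smul]
  congr 1
  rcases θ.hw k with hw | hw
  · rw [hw, betaG]
    simp only [one_mul, Gam]
    rw [hii]
  · rw [hw, betaG]
    have g1 := gam_neg hx hi (θ.b k)
    have g0 := gam_neg hx (i := i - 1) (by omega) (θ.b k)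
    rw [hii] at g0
    rw [g1, g0]
    simp only [neg_one_mul, neg_mul]
    ring

omit hx

lemma betaG_nonneg (hx : ∀ i, i + 1 < N → x i < x (i + 1)) {r : ℝ} {i : ℕ}
    (hi1 : 1 ≤ i) (hi : i + 1 < N) : 0 ≤ betaG x r i := by
  have hii : i - 1 + 1 = i := by omega
  have := Gam_adj hx (r := r) (i := i - 1) (by omega)
  rw [hii] at this
  rw [betaG]
  linarith

lemma betaG_sum_le_one (hN : 2 ≤ N) (hx : ∀ i, i + 1 < N → x i < x (i + 1)) (r : ℝ) :
    ∑ i ∈ Finset.Ico 1 (N - 1), betaG x r i ≤ 1 := by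
  rw [Finset.sum_Ico_eq_sum_range]
  have hcong : ∀ j ∈ Finset.range (N - 1 - 1), betaG x r (1 + j) = Gam x r (j + 1) - Gam x r j := by
    intro j _
    rw [betaG, Nat.add_comm 1 j, Nat.add_sub_cancel]
  rw [Finset.sum_congr rfl hcong, Finset.sum_range_sub (f := Gam x r)]
  have h1 : Gam x r (N - 1 - 1) ≤ 1 := by
    rcases Nat.eq_or_lt_of_le hN with h | h
    · -- N = 2 : N-1-1 = 0, need Gam x r 0 ≤ 1 with 0+1 < N
      exact Gam_le_one hx (by omega)
    · exact Gam_le_one hx (by omega)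
  have h2 : 0 ≤ Gam x r 0 := Gam_nonneg hx (by omega)
  linarith

lemma norm_Bvec_le (hN : 2 ≤ N) (hx : ∀ i, i + 1 < N → x i < x (i + 1)) (k : Fin K) :
    ‖Bvec N x y θ k‖ ≤ 1 := by
  calc ‖Bvec N x y θ k‖ ≤ ∑ i ∈ Finset.Ico 1 (N - 1), ‖betaG x (θ.w k * θ.b k) i • uvec x y i‖ :=
        norm_sum_le _ _
    _ ≤ ∑ i ∈ Finset.Ico 1 (N - 1), betaG x (θ.w k * θ.b k) i := by
        refine Finset.sum_le_sum fun i hi => ?_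
        rw [Finset.mem_Ico] at hi
        have hb : 0 ≤ betaG x (θ.w k * θ.b k) i := betaG_nonneg hx hi.1 (by omega)
        rw [norm_smul, Real.norm_eq_abs, abs_of_nonneg hb]
        calc betaG x (θ.w k * θ.b k) i * ‖uvec x y i‖ ≤ betaG x (θ.w k * θ.b k) i * 1 :=
              mul_le_mul_of_nonneg_left (norm_uvec_le i) hb
          _ = _ := mul_one _
    _ ≤ 1 := betaG_sum_le_one hN hx _

lemma key_sum (hN : 2 ≤ N) (hx : ∀ i, i + 1 < N → x i < x (i + 1))
    (hint : Interpolates N x y θ) :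
    ∑ i ∈ Finset.Ico 1 (N - 1), ‖del x y i‖ = ∑ k : Fin K, ⟪Bvec N x y θ k, θ.v k⟫_ℝ := by
  have step1 : ∀ i ∈ Finset.Ico 1 (N - 1),
      ‖del x y i‖ = ∑ k : Fin K, betaG x (θ.w k * θ.b k) i * ⟪uvec x y i, θ.v k⟫_ℝ := by
    intro i hi
    rw [Finset.mem_Ico] at hi
    rw [← inner_u_del i]
    rw [delta_eq hx hint hi.1 (by omega), inner_sum]
    exact Finset.sum_congr rfl fun k _ => real_inner_smul_right _ _ _
  rw [Finset.sum_congr rfl step1, Finset.sum_comm]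
  refine Finset.sum_congr rfl fun k _ => ?_
  rw [Bvec, sum_inner]
  exact Finset.sum_congr rfl fun i _ => (real_inner_smul_left _ _ _).symm

lemma lower_bound (hN : 2 ≤ N) (hx : ∀ i, i + 1 < N → x i < x (i + 1))
    (hint : Interpolates N x y θ) :
    ∑ i ∈ Finset.Ico 1 (N - 1), ‖del x y i‖ ≤ cost θ := by
  rw [key_sum hN hx hint, cost]
  refine Finset.sum_le_sum fun k _ => ?_
  calc ⟪Bvec N x y θ k, θ.v k⟫_ℝ ≤ ‖Bvec N x y θ k‖ * ‖θ.v k‖ := real_inner_le_norm _ _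
    _ ≤ 1 * ‖θ.v k‖ := mul_le_mul_of_nonneg_right (norm_Bvec_le hN hx k) (norm_nonneg _)
    _ = ‖θ.v k‖ := one_mul _

end Vec

end CtdAux

namespace CtdAux

section Vec2

variable {T K N : ℕ} {x : ℕ → ℝ} {y : ℕ → EuclideanSpace ℝ (Fin T)}

variable (hx : ∀ i, i + 1 < N → x i < x (i + 1))
include hx

lemma chordS {ι : Type*} (S : Finset ι) (q : ι → ℝ) (e : ι → EuclideanSpace ℝ (Fin T))
    (hq : ∀ k ∈ S, e k ≠ 0 → ∃ j', 1 ≤ j' ∧ j' + 1 < N ∧ q k = x j') {j : ℕ} (hj : j + 1 < N) :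
    (∑ k ∈ S, max (x (j+1) - q k) 0 • e k) - ∑ k ∈ S, max (x j - q k) 0 • e k
      = (x (j+1) - x j) • ∑ k ∈ S.filter (fun k => q k ≤ x j), e k := by
  classical
  rw [← Finset.sum_sub_distrib]
  have hterm : ∀ k ∈ S, (max (x (j+1) - q k) 0 • e k - max (x j - q k) 0 • e k)
      = if q k ≤ x j then (x (j+1) - x j) • e k else 0 := by
    intro k hk
    rw [← sub_smul]
    by_cases hqk : q k ≤ x j
    · rw [if_pos hqk]
      have h1 : max (x j - q k) 0 = x j - q k := max_eq_left (by linarith)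
      have h2 : max (x (j+1) - q k) 0 = x (j+1) - q k :=
        max_eq_left (by have := hx j hj; linarith)
      rw [h1, h2]
      congr 1
      ring
    · rw [if_neg hqk]
      push_neg at hqk
      by_cases he : e k = 0
      · rw [he, smul_zero]
      · obtain ⟨j', hj'1, hj'2, hj'3⟩ := hq k hk he
        have hjj' : j < j' := by
          by_contra hc
          push_neg at hc
          have := xmono hx j' j hc (by omega)
          rw [hj'3] at hqk
          linarith
        have hxj1 : x (j+1) ≤ q k := by
          rw [hj'3]
          exact xmono hx (j+1) j' (by omega) (by omega)
        have h1 : max (x j - q k) 0 = 0 := max_eq_right (by linarith [hx j hj])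
        have h2 : max (x (j+1) - q k) 0 = 0 := max_eq_right (by linarith)
        rw [h1, h2, sub_self, zero_smul]
  rw [Finset.sum_congr rfl hterm, ← Finset.sum_filter, Finset.smul_sum]

omit hx

lemma ctd_eq (N : ℕ) (x : ℕ → ℝ) (y : ℕ → EuclideanSpace ℝ (Fin T)) (t : ℝ) :
    ctd N x y t = (y 0 - x 0 • slopeVec x y 0) + t • slopeVec x y 0
      + ∑ i ∈ Finset.Ico 1 (N-1), max (t - x i) 0 • del x y i := by
  rw [ctd, sub_smul]
  simp only [del]
  abel

include hx

lemma ctd_interp (hN : 2 ≤ N) : ∀ j, j < N → ctd N x y (x j) = y j := by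
  intro j
  induction j with
  | zero =>
    intro _
    rw [ctd_eq]
    have hz : ∀ i ∈ Finset.Ico 1 (N-1), max (x 0 - x i) 0 • del x y i = 0 := by
      intro i hi
      rw [Finset.mem_Ico] at hi
      have : x 0 ≤ x i := xmono hx 0 i (by omega) (by omega)
      rw [max_eq_right (by linarith), zero_smul]
    rw [Finset.sum_congr rfl hz, Finset.sum_const_zero]
    abel
  | succ j ih =>
    intro hj
    have hyj := ih (by omega)
    have hq : ∀ k ∈ Finset.Ico 1 (N-1), del x y k ≠ 0 →
        ∃ j', 1 ≤ j' ∧ j' + 1 < N ∧ x k = x j' := by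
      intro k hk _
      rw [Finset.mem_Ico] at hk
      exact ⟨k, hk.1, by omega, rfl⟩
    have hc := chordS hx (Finset.Ico 1 (N-1)) x (del x y) hq (j := j) hj
    have hfil : (Finset.Ico 1 (N-1)).filter (fun i => x i ≤ x j) = Finset.Ico 1 (j+1) := by
      ext i
      simp only [Finset.mem_filter, Finset.mem_Ico]
      constructor
      · rintro ⟨⟨h1, h2⟩, h3⟩
        refine ⟨h1, ?_⟩
        by_contra hcon
        push_neg at hcon
        have := xstrict hx j i (by omega) (by omega)
        linarith
      · rintro ⟨h1, h2⟩
        exact ⟨⟨h1, by omega⟩, xmono hx i j (by omega) (by omega)⟩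
    rw [hfil] at hc
    have htel : slopeVec x y 0 + ∑ i ∈ Finset.Ico 1 (j+1), del x y i = slopeVec x y j := by
      rw [Finset.sum_Ico_eq_sum_range]
      have hcg : ∀ i ∈ Finset.range (j+1-1), del x y (1+i) = slopeVec x y (i+1) - slopeVec x y i := by
        intro i _
        rw [del, Nat.add_comm 1 i, Nat.add_sub_cancel]
      rw [Finset.sum_congr rfl hcg, Finset.sum_range_sub (f := slopeVec x y), Nat.add_sub_cancel]
      abel
    have hstep : ctd N x y (x (j+1)) = ctd N x y (x j) + (x (j+1) - x j) • slopeVec x y j := by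
      rw [ctd_eq, ctd_eq (t := x j)]
      have h2 : (x (j+1) - x j) • slopeVec x y j
          = (x (j+1) - x j) • slopeVec x y 0
            + ((∑ i ∈ Finset.Ico 1 (N-1), max (x (j+1) - x i) 0 • del x y i)
              - ∑ i ∈ Finset.Ico 1 (N-1), max (x j - x i) 0 • del x y i) := by
        rw [hc, ← smul_add, htel]
      rw [h2, sub_smul]
      abel
    rw [hstep, hyj, slopeVec, smul_inv_smul₀ (Lpos hx hj).ne']
    abel

end Vec2

/-- The connect-the-dots network. -/
def thetaStar (T K N : ℕ) (x : ℕ → ℝ) (y : ℕ → EuclideanSpace ℝ (Fin T)) : ReLUParams T K where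
  v k := if k.1 + 2 < N then del x y (k.1 + 1) else 0
  w _ := 1
  b k := -(x (k.1 + 1))
  A := slopeVec x y 0
  c := y 0 - x 0 • slopeVec x y 0
  hw _ := Or.inl rfl

section Star

variable {T K N : ℕ} {x : ℕ → ℝ} {y : ℕ → EuclideanSpace ℝ (Fin T)}

lemma thetaStar_fun (hK : N - 2 ≤ K) (t : ℝ) :
    nnFun (thetaStar T K N x y) t = ctd N x y t := by
  classical
  rw [nnFun, ctd_eq]
  have hsum : (∑ k : Fin K, max ((thetaStar T K N x y).w k * t + (thetaStar T K N x y).b k) 0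
        • (thetaStar T K N x y).v k)
      = ∑ i ∈ Finset.Ico 1 (N-1), max (t - x i) 0 • del x y i := by
    have hfin : (∑ k : Fin K, max ((thetaStar T K N x y).w k * t + (thetaStar T K N x y).b k) 0
          • (thetaStar T K N x y).v k)
        = ∑ j ∈ Finset.range K, max (t - x (j+1)) 0 • (if j + 2 < N then del x y (j+1) else 0) := by
      have hcg : ∀ k : Fin K, max ((thetaStar T K N x y).w k * t + (thetaStar T K N x y).b k) 0
            • (thetaStar T K N x y).v k
          = (fun j => max (t - x (j+1)) 0 • (if j + 2 < N then del x y (j+1) else 0)) k.1 := by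
        intro k
        have harg : (thetaStar T K N x y).w k * t + (thetaStar T K N x y).b k = t - x (k.1+1) := by
          show (1:ℝ) * t + -(x (k.1+1)) = t - x (k.1+1)
          ring
        rw [harg]
        rfl
      exact (Finset.sum_congr rfl (fun k _ => hcg k)).trans
        (Fin.sum_univ_eq_sum_range
          (fun j => max (t - x (j + 1)) 0 • if j + 2 < N then del x y (j + 1) else 0) K)
    rw [hfin]
    rw [← Finset.sum_subset (Finset.range_subset_range.2 hK)
      (fun j _ hj => by
        rw [Finset.mem_range, not_lt] at hj
        rw [if_neg (by omega), smul_zero])]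
    rw [Finset.sum_Ico_eq_sum_range]
    have : N - 1 - 1 = N - 2 := by omega
    rw [this]
    refine Finset.sum_congr rfl fun j hj => ?_
    rw [Finset.mem_range] at hj
    rw [if_pos (by omega), Nat.add_comm 1 j]
  rw [hsum]
  show _ + t • slopeVec x y 0 + (y 0 - x 0 • slopeVec x y 0) = _
  abel

lemma thetaStar_cost (hK : N - 2 ≤ K) :
    cost (thetaStar T K N x y) = ∑ i ∈ Finset.Ico 1 (N-1), ‖del x y i‖ := by
  classical
  rw [cost]
  have hfin : (∑ k : Fin K, ‖(thetaStar T K N x y).v k‖)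
      = ∑ j ∈ Finset.range K, ‖if j + 2 < N then del x y (j+1) else (0 : EuclideanSpace ℝ (Fin T))‖ :=
    Fin.sum_univ_eq_sum_range
      (fun j => ‖if j + 2 < N then del x y (j+1) else (0 : EuclideanSpace ℝ (Fin T))‖) K
  rw [hfin]
  rw [← Finset.sum_subset (Finset.range_subset_range.2 hK)
    (fun j _ hj => by
      rw [Finset.mem_range, not_lt] at hj
      rw [if_neg (by omega), norm_zero])]
  rw [Finset.sum_Ico_eq_sum_range]
  have : N - 1 - 1 = N - 2 := by omega
  rw [this]
  refine Finset.sum_congr rfl fun j hj => ?_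
  rw [Finset.mem_range] at hj
  rw [if_pos (by omega), Nat.add_comm 1 j]

lemma thetaStar_interp (hN : 2 ≤ N) (hx : ∀ i, i + 1 < N → x i < x (i + 1)) (hK : N - 2 ≤ K) :
    Interpolates N x y (thetaStar T K N x y) := by
  intro i hi
  rw [thetaStar_fun hK, ctd_interp hx hN i hi]

end Star

section Canon

variable {T N : ℕ} {x : ℕ → ℝ}

lemma canon_vanish (hN : 2 ≤ N) (hx : ∀ i, i + 1 < N → x i < x (i + 1))
    {ι : Type*} (S : Finset ι) (q : ι → ℝ) (e : ι → EuclideanSpace ℝ (Fin T))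
    (c A : EuclideanSpace ℝ (Fin T))
    (hq : ∀ k ∈ S, e k ≠ 0 → ∃ j, 1 ≤ j ∧ j + 1 < N ∧ q k = x j)
    (h0 : ∀ j, j < N → c + x j • A + ∑ k ∈ S, max (x j - q k) 0 • e k = 0) (t : ℝ) :
    c + t • A + ∑ k ∈ S, max (t - q k) 0 • e k = 0 := by
  classical
  set T' : ℕ → EuclideanSpace ℝ (Fin T) := fun j => ∑ k ∈ S.filter (fun k => q k ≤ x j), e k
    with hT'
  have hAT : ∀ j, j + 1 < N → A + T' j = 0 := by
    intro j hj
    have h1 := h0 (j+1) (by omega)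
    have h2 := h0 j (by omega)
    have hd := chordS hx S q e hq hj
    have hexp : (x (j+1) - x j) • (A + T' j) = 0 := by
      have : (x (j+1) - x j) • (A + T' j)
          = (c + x (j+1) • A + ∑ k ∈ S, max (x (j+1) - q k) 0 • e k)
            - (c + x j • A + ∑ k ∈ S, max (x j - q k) 0 • e k) := by
        rw [smul_add, ← hd, sub_smul]
        abel
      rw [this, h1, h2, sub_zero]
    exact (smul_eq_zero.mp hexp).resolve_left (Lpos hx hj).ne'
  have hA : A = 0 := by
    have h := hAT 0 (by omega)
    have hT0 : T' 0 = 0 := by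
      refine Finset.sum_eq_zero fun k hk => ?_
      rw [Finset.mem_filter] at hk
      by_contra he
      obtain ⟨j', h1, h2, h3⟩ := hq k hk.1 he
      have : x 0 < x j' := xstrict hx 0 j' (by omega) (by omega)
      rw [h3] at hk
      linarith [hk.2]
    rw [hT0, add_zero] at h
    exact h
  have hTj : ∀ j, j + 1 < N → T' j = 0 := by
    intro j hj
    have h := hAT j hj
    rw [hA, zero_add] at h
    exact h
  have hTot : ∑ k ∈ S, e k = 0 := by
    have h1 : ∑ k ∈ S.filter (fun k => q k ≤ x (N-2)), e k = ∑ k ∈ S, e k := by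
      apply Finset.sum_filter_of_ne
      intro k hk he
      obtain ⟨j', hj1, hj2, hj3⟩ := hq k hk he
      rw [hj3]
      exact xmono hx j' (N-2) (by omega) (by omega)
    rw [← h1]
    exact hTj (N-2) (by omega)
  have hsum : ∀ t : ℝ, ∑ k ∈ S, max (t - q k) 0 • e k = 0 := by
    intro t
    have hterm : ∀ k ∈ S, max (t - q k) 0 • e k =
        (∑ j ∈ Finset.Ico 1 (N-1),
          ((max (t - x j) 0 - max (t - x (j+1)) 0) * (if q k ≤ x j then 1 else 0)) • e k)
          + max (t - x (N-1)) 0 • e k := by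
      intro k hk
      by_cases he : e k = 0
      · simp [he]
      · obtain ⟨j₀, hj1, hj2, hj3⟩ := hq k hk he
        have step : ∑ j ∈ Finset.Ico 1 (N-1),
            ((max (t - x j) 0 - max (t - x (j+1)) 0) * (if q k ≤ x j then 1 else 0)) • e k
            = ∑ j ∈ Finset.Ico j₀ (N-1), (max (t - x j) 0 - max (t - x (j+1)) 0) • e k := by
          have hcg : ∀ j ∈ Finset.Ico 1 (N-1),
              ((max (t - x j) 0 - max (t - x (j+1)) 0) * (if q k ≤ x j then 1 else 0)) • e k
              = if j₀ ≤ j then (max (t - x j) 0 - max (t - x (j+1)) 0) • e k else 0 := by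
            intro j hj
            rw [Finset.mem_Ico] at hj
            have hiff : (q k ≤ x j) ↔ (j₀ ≤ j) := by
              constructor
              · intro h
                by_contra hc
                push_neg at hc
                have := xstrict hx j j₀ hc (by omega)
                rw [hj3] at h
                linarith
              · intro h
                rw [hj3]
                exact xmono hx j₀ j h (by omega)
            by_cases hcase : j₀ ≤ j
            · rw [if_pos hcase, if_pos (hiff.mpr hcase), mul_one]
            · rw [if_neg hcase, if_neg (fun hcc => hcase (hiff.mp hcc)), mul_zero, zero_smul]
          rw [Finset.sum_congr rfl hcg, ← Finset.sum_filter]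
          congr 1
          ext i
          simp only [Finset.mem_filter, Finset.mem_Ico]
          omega
        have tel : ∑ j ∈ Finset.Ico j₀ (N-1), (max (t - x j) 0 - max (t - x (j+1)) 0) • e k
            = (max (t - x j₀) 0 - max (t - x (N-1)) 0) • e k := by
          rw [← Finset.sum_smul]
          congr 1
          rw [Finset.sum_Ico_eq_sum_range]
          have hcg2 : ∀ i ∈ Finset.range (N-1-j₀),
              max (t - x (j₀ + i)) 0 - max (t - x (j₀ + i + 1)) 0
              = (fun i => max (t - x (j₀ + i)) 0) i - (fun i => max (t - x (j₀ + i)) 0) (i+1) := by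
            intro i _
            rfl
          rw [Finset.sum_congr rfl hcg2, Finset.sum_range_sub' (f := fun i => max (t - x (j₀ + i)) 0)]
          have h2 : j₀ + (N - 1 - j₀) = N - 1 := by omega
          rw [Nat.add_zero, h2]
        rw [step, tel, hj3, sub_smul]
        abel
    rw [Finset.sum_congr rfl hterm, Finset.sum_add_distrib]
    have hpart2 : ∑ k ∈ S, max (t - x (N-1)) 0 • e k = 0 := by
      rw [← Finset.smul_sum, hTot, smul_zero]
    have hpart1 : ∑ k ∈ S, ∑ j ∈ Finset.Ico 1 (N-1),
        ((max (t - x j) 0 - max (t - x (j+1)) 0) * (if q k ≤ x j then 1 else 0)) • e k = 0 := by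
      rw [Finset.sum_comm]
      refine Finset.sum_eq_zero fun j hj => ?_
      rw [Finset.mem_Ico] at hj
      have hcg : ∀ k ∈ S, ((max (t - x j) 0 - max (t - x (j+1)) 0) * (if q k ≤ x j then 1 else 0)) • e k
          = (max (t - x j) 0 - max (t - x (j+1)) 0) • (if q k ≤ x j then e k else 0) := by
        intro k _
        split_ifs with h
        · rw [mul_one]
        · rw [mul_zero, zero_smul, smul_zero]
      rw [Finset.sum_congr rfl hcg, ← Finset.smul_sum]
      have : ∑ k ∈ S, (if q k ≤ x j then e k else 0) = T' j := by
        rw [hT']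
        exact (Finset.sum_filter _ _).symm
      rw [this, hTj j (by omega), smul_zero]
    rw [hpart1, hpart2, add_zero]
  have hc : c = 0 := by
    have h := h0 0 (by omega)
    rw [hA, smul_zero, add_zero, hsum (x 0), add_zero] at h
    exact h
  rw [hA, hc, hsum t, smul_zero, add_zero, add_zero]

end Canon

end CtdAux

namespace CtdAux

section Eq

open scoped InnerProductSpace

variable {T K N : ℕ} {x : ℕ → ℝ} {y : ℕ → EuclideanSpace ℝ (Fin T)} {θ : ReLUParams T K}

lemma neuron_eq (hN : 2 ≤ N) (hx : ∀ i, i + 1 < N → x i < x (i + 1))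
    (hcond : ∀ i : ℕ, 1 ≤ i → i + 3 ≤ N →
      ¬ (del x y i ≠ 0 ∧ del x y (i+1) ≠ 0 ∧ Aligned (del x y i) (del x y (i+1))))
    {k : Fin K}
    (hk : ⟪Bvec N x y θ k, θ.v k⟫_ℝ = ‖θ.v k‖) (hv : θ.v k ≠ 0) :
    ∃ j, 1 ≤ j ∧ j + 1 < N ∧ θ.w k * θ.b k = -(x j) := by
  classical
  set r : ℝ := θ.w k * θ.b k with hr
  set B : EuclideanSpace ℝ (Fin T) := Bvec N x y θ k with hB
  have hnv : 0 < ‖θ.v k‖ := norm_pos_iff.2 hv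
  have hBle : ‖B‖ ≤ 1 := norm_Bvec_le hN hx k
  have hB1 : ‖B‖ = 1 := by
    have hCS : ⟪B, θ.v k⟫_ℝ ≤ ‖B‖ * ‖θ.v k‖ := real_inner_le_norm _ _
    rw [hk] at hCS
    nlinarith
  have hBB : ∑ i ∈ Finset.Ico 1 (N-1), betaG x r i * ⟪B, uvec x y i⟫_ℝ = 1 := by
    have hinner : ⟪B, B⟫_ℝ = ∑ i ∈ Finset.Ico 1 (N-1), betaG x r i * ⟪B, uvec x y i⟫_ℝ := by
      conv_lhs => rw [hB, Bvec]
      rw [inner_sum]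
      exact Finset.sum_congr rfl fun i _ => real_inner_smul_right _ _ _
    rw [← hinner, real_inner_self_eq_norm_sq, hB1, one_pow]
  have hterm : ∀ i ∈ Finset.Ico 1 (N-1), betaG x r i * ⟪B, uvec x y i⟫_ℝ ≤ betaG x r i := by
    intro i hi
    rw [Finset.mem_Ico] at hi
    have hb : 0 ≤ betaG x r i := betaG_nonneg hx hi.1 (by omega)
    have hq : ⟪B, uvec x y i⟫_ℝ ≤ 1 := by
      calc ⟪B, uvec x y i⟫_ℝ ≤ ‖B‖ * ‖uvec x y i‖ := real_inner_le_norm _ _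
        _ ≤ 1 * 1 := mul_le_mul hBle (norm_uvec_le i) (norm_nonneg _) zero_le_one
        _ = 1 := one_mul 1
    calc betaG x r i * ⟪B, uvec x y i⟫_ℝ ≤ betaG x r i * 1 :=
          mul_le_mul_of_nonneg_left hq hb
      _ = betaG x r i := mul_one _
  have h1 : ∑ i ∈ Finset.Ico 1 (N-1), betaG x r i = 1 := by
    have hge : 1 ≤ ∑ i ∈ Finset.Ico 1 (N-1), betaG x r i := by
      rw [← hBB]
      exact Finset.sum_le_sum hterm
    exact le_antisymm (betaG_sum_le_one hN hx r) hge
  have h2 : ∀ i ∈ Finset.Ico 1 (N-1), betaG x r i * ⟪B, uvec x y i⟫_ℝ = betaG x r i := by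
    have h0 : ∑ i ∈ Finset.Ico 1 (N-1), (betaG x r i - betaG x r i * ⟪B, uvec x y i⟫_ℝ) = 0 := by
      rw [Finset.sum_sub_distrib, h1, hBB, sub_self]
    have := (Finset.sum_eq_zero_iff_of_nonneg
      (fun i hi => sub_nonneg.2 (hterm i hi))).mp h0
    intro i hi
    have hz := this i hi
    linarith
  have hsupp : ∀ i ∈ Finset.Ico 1 (N-1), betaG x r i ≠ 0 →
      uvec x y i = B ∧ del x y i ≠ 0 := by
    intro i hi hne
    have hq1 : ⟪B, uvec x y i⟫_ℝ = 1 := by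
      have hβ : betaG x r i * ⟪B, uvec x y i⟫_ℝ = betaG x r i * 1 :=
        (h2 i hi).trans (mul_one _).symm
      exact mul_left_cancel₀ hne hβ
    have hu1 : ‖uvec x y i‖ = 1 := by
      refine le_antisymm (norm_uvec_le i) ?_
      have hle : ⟪B, uvec x y i⟫_ℝ ≤ ‖B‖ * ‖uvec x y i‖ := real_inner_le_norm _ _
      rw [hB1, one_mul, hq1] at hle
      exact hle
    have heqn : ⟪B, uvec x y i⟫_ℝ = ‖B‖ * ‖uvec x y i‖ := by
      rw [hB1, hu1, one_mul, hq1]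
    have hres := inner_eq_norm_mul_iff_real.mp heqn
    rw [hu1, hB1, one_smul, one_smul] at hres
    have hdel : del x y i ≠ 0 := by
      intro hcontra
      rw [uvec, hcontra, smul_zero] at hu1
      simp at hu1
    exact ⟨hres.symm, hdel⟩
  have hex : ∃ j ∈ Finset.Ico 1 (N-1), betaG x r j ≠ 0 := by
    by_contra hc
    push_neg at hc
    have : ∑ i ∈ Finset.Ico 1 (N-1), betaG x r i = 0 :=
      Finset.sum_eq_zero fun i hi => hc i hi
    rw [h1] at this
    norm_num at this
  obtain ⟨j, hjmem, hjne⟩ := hex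
  have hjmem' := Finset.mem_Ico.mp hjmem
  have hcons : ∀ a b, a ∈ Finset.Ico 1 (N-1) → b ∈ Finset.Ico 1 (N-1) → a < b →
      betaG x r a ≠ 0 → betaG x r b ≠ 0 → False := by
    intro a b ha hb hab hna hnb
    have ha' := Finset.mem_Ico.mp ha
    have hb' := Finset.mem_Ico.mp hb
    have hga : Gam x r (a-1) < Gam x r a := by
      have hle : Gam x r (a-1) ≤ Gam x r a := by
        have := Gam_adj hx (r := r) (i := a - 1) (by omega)
        have haa : a - 1 + 1 = a := by omega
        rwa [haa] at this
      rcases lt_or_eq_of_le hle with h | h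
      · exact h
      · exfalso; apply hna; rw [betaG, ← h, sub_self]
    have hgb : Gam x r (b-1) < Gam x r b := by
      have hle : Gam x r (b-1) ≤ Gam x r b := by
        have := Gam_adj hx (r := r) (i := b - 1) (by omega)
        have hbb : b - 1 + 1 = b := by omega
        rwa [hbb] at this
      rcases lt_or_eq_of_le hle with h | h
      · exact h
      · exfalso; apply hnb; rw [betaG, ← h, sub_self]
    have hpos : 0 < x (a+1) + r := by
      refine Gam_pos_arg hx (by omega) ?_
      have : 0 ≤ Gam x r (a-1) := Gam_nonneg hx (by omega)
      linarith
    have hneg : x (b-1) + r < 0 := by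
      have hlt1 : Gam x r (b-1) < 1 := by
        have : Gam x r b ≤ 1 := Gam_le_one hx (by omega)
        linarith
      have := Gam_lt_one_arg hx (i := b - 1) (by omega) hlt1
      exact this
    have hba : b = a + 1 := by
      by_contra hc
      have : a + 1 ≤ b - 1 := by omega
      have := xmono hx (a+1) (b-1) this (by omega)
      linarith
    have hua := hsupp a ha hna
    have hub := hsupp b hb hnb
    apply hcond a (by omega) (by omega)
    refine ⟨hua.2, by rw [← hba]; exact hub.2, ?_⟩
    have hda : del x y a = ‖del x y a‖ • B := by
      conv_lhs => rw [del_eq_norm_smul_uvec hua.2]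
      rw [hua.1]
    have hdb : del x y (a+1) = ‖del x y (a+1)‖ • B := by
      rw [← hba]
      conv_lhs => rw [del_eq_norm_smul_uvec hub.2]
      rw [hub.1]
    show (inner ℝ (del x y a) (del x y (a+1)) : ℝ) = ‖del x y a‖ * ‖del x y (a+1)‖
    conv_lhs => rw [hda, hdb]
    rw [real_inner_smul_left, real_inner_smul_right, real_inner_self_eq_norm_sq, hB1]
    ring
  have huniq : ∀ i ∈ Finset.Ico 1 (N-1), i ≠ j → betaG x r i = 0 := by
    intro i hi hij
    by_contra hine
    rcases lt_or_gt_of_ne hij with hlt | hgt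
    · exact hcons i j hi hjmem hlt hine hjne
    · exact hcons j i hjmem hi hgt hjne hine
  have hbj : betaG x r j = 1 := by
    have hsingle : ∑ i ∈ Finset.Ico 1 (N-1), betaG x r i = betaG x r j :=
      Finset.sum_eq_single_of_mem j hjmem (fun i hi hij => huniq i hi hij)
    rw [h1] at hsingle
    linarith
  have hGj1 : Gam x r j = 1 := by
    have b1 : Gam x r j ≤ 1 := Gam_le_one hx (by omega)
    have b2 : 0 ≤ Gam x r (j-1) := Gam_nonneg hx (by omega)
    rw [betaG] at hbj
    linarith
  have hGj0 : Gam x r (j-1) = 0 := by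
    rw [betaG] at hbj
    linarith
  have e1 : 0 ≤ x j + r := Gam_eq_one_arg hx (by omega) hGj1
  have e0 : x (j - 1 + 1) + r ≤ 0 := Gam_eq_zero_arg hx (by omega) hGj0
  have hjj : j - 1 + 1 = j := by omega
  rw [hjj] at e0
  exact ⟨j, hjmem'.1, by omega, by linarith⟩

end Eq

end CtdAux

namespace CtdAux

section Split

variable {T K : ℕ} (θ : ReLUParams T K)

/-- kink location of neuron `k` -/
def qk (k : Fin K) : ℝ := -(θ.w k * θ.b k)

lemma neuron_split (s : ℝ) (k : Fin K) :
    max (θ.w k * s + θ.b k) 0 • θ.v k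
      = max (s - qk θ k) 0 • θ.v k + (if θ.w k = -1 then (qk θ k - s) • θ.v k else 0) := by
  rcases θ.hw k with hw | hw
  · rw [if_neg (by rw [hw]; norm_num), add_zero]
    have harg : θ.w k * s + θ.b k = s - qk θ k := by
      rw [qk, hw]; ring
    rw [harg]
  · have hqk : qk θ k = θ.b k := by rw [qk, hw]; ring
    rw [if_pos hw, hqk]
    have harg : θ.w k * s + θ.b k = θ.b k - s := by rw [hw]; ring
    rw [harg]
    have hmax : max (θ.b k - s) 0 = max (s - θ.b k) 0 + (θ.b k - s) := by
      rcases le_total (s - θ.b k) 0 with h | h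
      · rw [max_eq_right h, max_eq_left (by linarith), zero_add]
      · rw [max_eq_left h, max_eq_right (by linarith)]
        ring
    rw [hmax, add_smul]

end Split

end CtdAux

namespace CtdAux

theorem main_aux {T K N : ℕ} (hN : 2 ≤ N) (hK : N - 2 ≤ K)
    (x : ℕ → ℝ) (y : ℕ → EuclideanSpace ℝ (Fin T))
    (hx : ∀ i, i + 1 < N → x i < x (i + 1))
    (hcond : ∀ i : ℕ, 1 ≤ i → i + 3 ≤ N →
      ¬ (slopeVec x y i - slopeVec x y (i - 1) ≠ 0 ∧
         slopeVec x y (i + 1) - slopeVec x y i ≠ 0 ∧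
         Aligned (slopeVec x y i - slopeVec x y (i - 1))
           (slopeVec x y (i + 1) - slopeVec x y i))) :
    ∀ θ : ReLUParams T K, IsMinimizer N x y θ → ∀ t : ℝ, nnFun θ t = ctd N x y t := by
  classical
  intro θ hmin t
  obtain ⟨hint, hopt⟩ := hmin
  -- Step 1: the cost of θ equals the minimal value.
  have hcost_le : cost θ ≤ ∑ i ∈ Finset.Ico 1 (N-1), ‖del x y i‖ := by
    have h := hopt (thetaStar T K N x y) (thetaStar_interp hN hx hK)
    rwa [thetaStar_cost hK] at h
  have hcost_ge := lower_bound hN hx hint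
  have hcosteq : ∑ i ∈ Finset.Ico 1 (N-1), ‖del x y i‖ = cost θ :=
    le_antisymm hcost_ge hcost_le
  -- Step 2: each neuron attains equality in the duality bound.
  open scoped InnerProductSpace in
  have htermeq : ∀ k : Fin K, ⟪Bvec N x y θ k, θ.v k⟫_ℝ = ‖θ.v k‖ := by
    have hsum_eq : ∑ k : Fin K, ⟪Bvec N x y θ k, θ.v k⟫_ℝ = ∑ k : Fin K, ‖θ.v k‖ := by
      rw [← key_sum hN hx hint, hcosteq, cost]
    have hle : ∀ k ∈ (Finset.univ : Finset (Fin K)),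
        ⟪Bvec N x y θ k, θ.v k⟫_ℝ ≤ ‖θ.v k‖ := by
      intro k _
      calc ⟪Bvec N x y θ k, θ.v k⟫_ℝ ≤ ‖Bvec N x y θ k‖ * ‖θ.v k‖ := real_inner_le_norm _ _
        _ ≤ 1 * ‖θ.v k‖ := mul_le_mul_of_nonneg_right (norm_Bvec_le hN hx k) (norm_nonneg _)
        _ = ‖θ.v k‖ := one_mul _
    have h0 : ∑ k : Fin K, (‖θ.v k‖ - ⟪Bvec N x y θ k, θ.v k⟫_ℝ) = 0 := by
      rw [Finset.sum_sub_distrib, hsum_eq, sub_self]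
    have := (Finset.sum_eq_zero_iff_of_nonneg
      (fun k hk => sub_nonneg.2 (hle k hk))).mp h0
    intro k
    have hz := this k (Finset.mem_univ k)
    linarith
  -- Step 3: the alignment condition in `del` form.
  have hcond' : ∀ i : ℕ, 1 ≤ i → i + 3 ≤ N →
      ¬ (del x y i ≠ 0 ∧ del x y (i+1) ≠ 0 ∧ Aligned (del x y i) (del x y (i+1))) := by
    intro i h1 h3
    have h := hcond i h1 h3
    simpa [del, Nat.add_sub_cancel] using h
  -- Step 4: every active neuron has its kink at an interior data point.
  have hqex : ∀ k : Fin K, θ.v k ≠ 0 → ∃ j, 1 ≤ j ∧ j + 1 < N ∧ qk θ k = x j := by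
    intro k hv
    obtain ⟨j, hj1, hj2, hj3⟩ := neuron_eq hN hx hcond' (htermeq k) hv
    exact ⟨j, hj1, hj2, by rw [qk, hj3, neg_neg]⟩
  -- Step 5: canonical form of the difference function.
  have hsum1 : ∀ s : ℝ, ∑ k : Fin K, max (θ.w k * s + θ.b k) 0 • θ.v k
      = (∑ k : Fin K, max (s - qk θ k) 0 • θ.v k)
        + ((∑ k : Fin K, (if θ.w k = -1 then (qk θ k) • θ.v k else 0))
          - s • ∑ k : Fin K, (if θ.w k = -1 then θ.v k else 0)) := by
    intro s
    rw [Finset.sum_congr rfl (fun k _ => neuron_split θ s k), Finset.sum_add_distrib]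
    congr 1
    rw [Finset.smul_sum, ← Finset.sum_sub_distrib]
    refine Finset.sum_congr rfl fun k _ => ?_
    split_ifs with h
    · rw [sub_smul]
    · simp
  have hIco : ∀ s : ℝ, ∑ i ∈ Finset.Ico 1 (N-1), max (s - x i) 0 • (-(del x y i))
      = -∑ i ∈ Finset.Ico 1 (N-1), max (s - x i) 0 • del x y i := by
    intro s
    rw [← Finset.sum_neg_distrib]
    exact Finset.sum_congr rfl fun i _ => smul_neg _ _
  have hform : ∀ s : ℝ,
      nnFun θ s - ctd N x y s
        = ((θ.c + ∑ k : Fin K, (if θ.w k = -1 then (qk θ k) • θ.v k else 0))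
            - (y 0 - x 0 • slopeVec x y 0))
          + s • ((θ.A - ∑ k : Fin K, (if θ.w k = -1 then θ.v k else 0)) - slopeVec x y 0)
          + ∑ kk ∈ Finset.disjSum Finset.univ (Finset.Ico 1 (N-1)),
              max (s - (Sum.elim (qk θ) x) kk) 0
                • (Sum.elim θ.v (fun i => -(del x y i))) kk := by
    intro s
    rw [nnFun, ctd_eq, Finset.sum_disjSum]
    simp only [Sum.elim_inl, Sum.elim_inr]
    rw [hsum1 s, hIco s, smul_sub, smul_sub]
    abel
  have h0 : ∀ j, j < N →
      ((θ.c + ∑ k : Fin K, (if θ.w k = -1 then (qk θ k) • θ.v k else 0))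
          - (y 0 - x 0 • slopeVec x y 0))
        + x j • ((θ.A - ∑ k : Fin K, (if θ.w k = -1 then θ.v k else 0)) - slopeVec x y 0)
        + ∑ kk ∈ Finset.disjSum Finset.univ (Finset.Ico 1 (N-1)),
            max (x j - (Sum.elim (qk θ) x) kk) 0
              • (Sum.elim θ.v (fun i => -(del x y i))) kk = 0 := by
    intro j hj
    rw [← hform (x j), hint j hj, ctd_interp hx hN j hj, sub_self]
  have hqq : ∀ kk ∈ Finset.disjSum (Finset.univ : Finset (Fin K)) (Finset.Ico 1 (N-1)),
      (Sum.elim θ.v (fun i => -(del x y i))) kk ≠ 0 →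
      ∃ j, 1 ≤ j ∧ j + 1 < N ∧ (Sum.elim (qk θ) x) kk = x j := by
    intro kk hkk hne
    rcases kk with k | i
    · simp only [Sum.elim_inl] at hne ⊢
      exact hqex k hne
    · simp only [Sum.elim_inr] at hne ⊢
      have hmem : i ∈ Finset.Ico 1 (N-1) := Finset.inr_mem_disjSum.mp hkk
      rw [Finset.mem_Ico] at hmem
      exact ⟨i, hmem.1, by omega, rfl⟩
  have hvanish := canon_vanish hN hx
    (Finset.disjSum Finset.univ (Finset.Ico 1 (N-1)))
    (Sum.elim (qk θ) x) (Sum.elim θ.v (fun i => -(del x y i)))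
    ((θ.c + ∑ k : Fin K, (if θ.w k = -1 then (qk θ k) • θ.v k else 0))
      - (y 0 - x 0 • slopeVec x y 0))
    ((θ.A - ∑ k : Fin K, (if θ.w k = -1 then θ.v k else 0)) - slopeVec x y 0)
    hqq h0 t
  have := (hform t).trans hvanish
  exact sub_eq_zero.mp this


end CtdAux

/-- If for no (1-indexed) `i ∈ {2, …, N−2}` the vectors
`sᵢ − s_{i−1}` and `s_{i+1} − sᵢ` are both nonzero and aligned (in our 0-indexed
slopes: for no `i` with `1 ≤ i` and `i + 3 ≤ N` are `sᵢ − s_{i−1}` and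
`s_{i+1} − sᵢ` both nonzero and aligned), then every parameter set attaining the
minimum of problem (P) represents the connect-the-dots interpolant `f_D`. -/
theorem ctd_unique_solution {T K N : ℕ} (hT : 1 ≤ T) (hN : 2 ≤ N) (hK : N - 2 ≤ K)
    (x : ℕ → ℝ) (y : ℕ → EuclideanSpace ℝ (Fin T))
    (hx : ∀ i, i + 1 < N → x i < x (i + 1))
    (hcond : ∀ i : ℕ, 1 ≤ i → i + 3 ≤ N →
      ¬ (slopeVec x y i - slopeVec x y (i - 1) ≠ 0 ∧
         slopeVec x y (i + 1) - slopeVec x y i ≠ 0 ∧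
         Aligned (slopeVec x y i - slopeVec x y (i - 1))
           (slopeVec x y (i + 1) - slopeVec x y i))) :
    ∀ θ : ReLUParams T K, IsMinimizer N x y θ → ∀ t : ℝ, nnFun θ t = ctd N x y t :=
  CtdAux.main_aux hN hK x y hx hcond

end
end

section
/- Let T ≥ 2 and N ≥ 2. The set of pairs (x, Y) ∈ ℝ^N × ℝ^{T×N}, with x = (x₁, …, x_N) and Y = [y₁, …, y_N], such that either the entries x₁, …, x_N are not pairwise distinct, or (after reindexing so that x₁ < x₂ < ⋯ < x_N) there exists i ∈ {2, …, N−2} for which the vectors s_i − s_{i−1} and s_{i+1} − s_i are both nonzero and aligned, has Lebesgue measure zero in ℝ^N × ℝ^{T×N}. -/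
/-!
Shallow univariate (input dimension 1) ReLU networks with `T` outputs,
width `K`, input weights `w k ∈ {−1, +1}`, and a residual connection.
-/

open scoped BigOperators
open Finset

noncomputable section

/-- Extend a `Fin N`-indexed family of reals to `ℕ` (by zero). -/
def extR (N : ℕ) (x : Fin N → ℝ) : ℕ → ℝ :=
  fun n => if h : n < N then x ⟨n, h⟩ else 0

/-- Extend a `Fin N`-indexed family of vectors to `ℕ` (by zero). -/
def extV {T : ℕ} (N : ℕ) (y : Fin N → EuclideanSpace ℝ (Fin T)) :
    ℕ → EuclideanSpace ℝ (Fin T) :=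
  fun n => if h : n < N then y ⟨n, h⟩ else 0


/-!
Off the null set where two of the `xᵢ` coincide, fix `x`. The pair of slope jumps
`(sᵢ - sᵢ₋₁, sᵢ₊₁ - sᵢ)` is then a linear function of `Y`, and it is onto `ℝ^T × ℝ^T` since
moving `yᵢ₋₁` and `yᵢ₊₂` changes the two jumps independently. For `T ≥ 2` the aligned pairs form a
null set of `ℝ^T × ℝ^T`: for `u ≠ 0`, the vectors aligned with `u` lie on the line `ℝ u`.
Preimages of null sets under surjective linear maps are null, and Fubini's theorem concludes.
-/

open MeasureTheory Measure
open scoped InnerProductSpace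

section Aligned

variable {E : Type*} [NormedAddCommGroup E] [InnerProductSpace ℝ E]

theorem mem_span_singleton_of_inner_eq_norm_mul {u v : E} (hu : u ≠ 0)
    (h : ⟪u, v⟫_ℝ = ‖u‖ * ‖v‖) : v ∈ ℝ ∙ u := by
  have hnu : ‖u‖ ≠ 0 := norm_ne_zero_iff.mpr hu
  refine Submodule.mem_span_singleton.mpr ⟨‖u‖⁻¹ * ‖v‖, ?_⟩
  rw [mul_smul, inner_eq_norm_mul_iff_real.mp h, inv_smul_smul₀ hnu]

theorem span_singleton_ne_top (hE : 2 ≤ Module.finrank ℝ E) (u : E) : (ℝ ∙ u) ≠ ⊤ := by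
  intro htop
  have := finrank_span_le_card (R := ℝ) ({u} : Set E)
  rw [htop, finrank_top, Set.toFinset_singleton, Finset.card_singleton] at this
  omega

variable [FiniteDimensional ℝ E] [MeasurableSpace E] [BorelSpace E]

theorem ae_inner_ne_norm_mul (μ ν : Measure E) [IsAddHaarMeasure μ] [IsAddHaarMeasure ν]
    (hE : 2 ≤ Module.finrank ℝ E) :
    ∀ᵐ q ∂μ.prod ν, ⟪q.1, q.2⟫_ℝ ≠ ‖q.1‖ * ‖q.2‖ := by
  have : Nontrivial E := Module.nontrivial_of_finrank_pos (R := ℝ) (by omega)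
  have hmeas : MeasurableSet {q : E × E | ⟪q.1, q.2⟫_ℝ ≠ ‖q.1‖ * ‖q.2‖} :=
    (isClosed_eq (by fun_prop) (by fun_prop)).measurableSet.compl
  refine (ae_prod_mem_iff_ae_ae_mem hmeas).mpr ?_
  filter_upwards [ae_ne μ 0] with u hu
  refine measure_mono_null (fun v hv => ?_) (addHaar_submodule ν _ (span_singleton_ne_top hE u))
  exact mem_span_singleton_of_inner_eq_norm_mul hu (not_not.mp hv)

end Aligned

theorem ae_injective {ι : Type*} [Fintype ι] (μ : Measure (ι → ℝ)) [IsAddHaarMeasure μ] :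
    ∀ᵐ x ∂μ, Function.Injective x := by
  have hpair : ∀ a b : ι, ∀ᵐ x ∂μ, a ≠ b → x a ≠ x b := by
    intro a b
    by_cases hab : a = b
    · exact .of_forall fun _ h => absurd hab h
    let φ : (ι → ℝ) →ₗ[ℝ] ℝ := LinearMap.proj (R := ℝ) (φ := fun _ => ℝ) a - LinearMap.proj b
    have hφ : LinearMap.ker φ ≠ ⊤ := fun htop => by
      classical
      simpa [φ, hab] using LinearMap.congr_fun (LinearMap.ker_eq_top.mp htop) (Pi.single a 1)
    refine measure_mono_null (fun x hx => ?_) (addHaar_submodule μ _ hφ)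
    simpa [φ, sub_eq_zero, hab] using hx
  filter_upwards [ae_all_iff.mpr fun a => ae_all_iff.mpr (hpair a)] with x hx a b hxab
  by_contra hab
  exact hx a b hab hxab

section Slopes

variable {T N : ℕ}

theorem extR_of_lt (x : Fin N → ℝ) {n : ℕ} (hn : n < N) : extR N x n = x ⟨n, hn⟩ := dif_pos hn

theorem extV_of_lt (y : Fin N → EuclideanSpace ℝ (Fin T)) {n : ℕ} (hn : n < N) :
    extV N y n = y ⟨n, hn⟩ := dif_pos hn

theorem extV_add (y z : Fin N → EuclideanSpace ℝ (Fin T)) :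
    extV N (y + z) = extV N y + extV N z := by
  funext n
  by_cases hn : n < N <;> simp [extV, hn]

theorem extV_smul (c : ℝ) (y : Fin N → EuclideanSpace ℝ (Fin T)) :
    extV N (c • y) = c • extV N y := by
  funext n
  by_cases hn : n < N <;> simp [extV, hn]

theorem measurable_extR (n : ℕ) : Measurable fun x : Fin N → ℝ => extR N x n := by
  by_cases hn : n < N <;> simp only [extR, hn, dif_pos, dif_neg, not_false_eq_true] <;> fun_prop

theorem measurable_extV (n : ℕ) :
    Measurable fun y : Fin N → EuclideanSpace ℝ (Fin T) => extV N y n := by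
  by_cases hn : n < N <;> simp only [extV, hn, dif_pos, dif_neg, not_false_eq_true] <;> fun_prop

def slopeJumps (x : ℕ → ℝ) (y : ℕ → EuclideanSpace ℝ (Fin T)) (i : ℕ) :
    EuclideanSpace ℝ (Fin T) × EuclideanSpace ℝ (Fin T) :=
  (slopeVec x y i - slopeVec x y (i - 1), slopeVec x y (i + 1) - slopeVec x y i)

def slopeJumpsLinearMap (N : ℕ) (x : ℕ → ℝ) (i : ℕ) :
    (Fin N → EuclideanSpace ℝ (Fin T)) →ₗ[ℝ]
      EuclideanSpace ℝ (Fin T) × EuclideanSpace ℝ (Fin T) where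
  toFun y := slopeJumps x (extV N y) i
  map_add' y z := by
    simp only [slopeJumps, slopeVec, extV_add, Pi.add_apply, Prod.mk_add_mk]
    congr 1 <;> module
  map_smul' c y := by
    simp only [slopeJumps, slopeVec, extV_smul, Pi.smul_apply, Prod.smul_mk, RingHom.id_apply]
    congr 1 <;> module

theorem slopeJumpsLinearMap_surjective {x : ℕ → ℝ} {i : ℕ} (hi : 1 ≤ i) (hiN : i + 3 ≤ N)
    (h₀ : x (i - 1) ≠ x i) (h₂ : x (i + 1) ≠ x (i + 2)) :
    Function.Surjective (slopeJumpsLinearMap (T := T) N x i) := by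
  obtain ⟨j, rfl⟩ : ∃ j, i = j + 1 := ⟨i - 1, by omega⟩
  rintro ⟨e₁, e₂⟩
  -- Only `y j` and `y (j + 3)` are nonzero, so `s (j + 1) = 0`, `s j = -e₁` and `s (j + 2) = e₂`.
  refine ⟨fun k => if k.val = j then (x (j + 1) - x j) • e₁
    else if k.val = j + 3 then (x (j + 3) - x (j + 2)) • e₂ else 0, ?_⟩
  have h₀' : x (j + 1) - x j ≠ 0 := sub_ne_zero.mpr (Ne.symm h₀)
  have h₂' : x (j + 3) - x (j + 2) ≠ 0 := sub_ne_zero.mpr (Ne.symm h₂)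
  simp [slopeJumpsLinearMap, slopeJumps, slopeVec, extV_of_lt _ (show j < N by omega),
    extV_of_lt _ (show j + 1 < N by omega), extV_of_lt _ (show j + 2 < N by omega),
    extV_of_lt _ (show j + 3 < N by omega), smul_smul, h₀', h₂']

end Slopes

instance Prod.isAddHaarMeasure_volume {G H : Type*} [AddGroup G] [TopologicalSpace G]
    [MeasureSpace G] [MeasurableAdd G] [AddGroup H] [TopologicalSpace H] [MeasureSpace H]
    [MeasurableAdd H] [(volume : Measure G).IsAddHaarMeasure]
    [(volume : Measure H).IsAddHaarMeasure] [SFinite (volume : Measure G)] [SFinite (volume : Measure H)] :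
    (volume : Measure (G × H)).IsAddHaarMeasure :=
  prod.instIsAddHaarMeasure _ _

section Measure

variable {T N : ℕ}

theorem isClosed_setOf_aligned :
    IsClosed {q : EuclideanSpace ℝ (Fin T) × EuclideanSpace ℝ (Fin T) | Aligned q.1 q.2} :=
  isClosed_eq (by fun_prop) (by fun_prop)

theorem ae_not_aligned (hT : 2 ≤ T) :
    ∀ᵐ q : EuclideanSpace ℝ (Fin T) × EuclideanSpace ℝ (Fin T), ¬ Aligned q.1 q.2 := by
  rw [volume_eq_prod]
  exact ae_inner_ne_norm_mul _ _ (by rwa [finrank_euclideanSpace_fin])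

theorem ae_not_aligned_slopeJumps_of_injective (hT : 2 ≤ T) {x : Fin N → ℝ}
    (hx : Function.Injective x) (σ : Equiv.Perm (Fin N)) {i : ℕ} (hi : 1 ≤ i) (hiN : i + 3 ≤ N) :
    ∀ᵐ y : Fin N → EuclideanSpace ℝ (Fin T),
      ¬ Aligned (slopeJumps (extR N (x ∘ σ)) (extV N (y ∘ σ)) i).1
        (slopeJumps (extR N (x ∘ σ)) (extV N (y ∘ σ)) i).2 := by
  have hne : ∀ k l, k < N → l < N → k ≠ l → extR N (x ∘ σ) k ≠ extR N (x ∘ σ) l :=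
    fun k l hk hl hkl => by
      rw [extR_of_lt _ hk, extR_of_lt _ hl]
      exact (hx.comp σ.injective).ne (by simpa using hkl)
  let L := slopeJumpsLinearMap N (extR N (x ∘ σ)) i ∘ₗ
    (LinearEquiv.funCongrLeft ℝ (EuclideanSpace ℝ (Fin T)) σ).toLinearMap
  have hL : Function.Surjective L :=
    (slopeJumpsLinearMap_surjective hi hiN (hne _ _ (by omega) (by omega) (by omega))
      (hne _ _ (by omega) (by omega) (by omega))).comp (LinearEquiv.funCongrLeft ℝ _ σ).surjective
  exact (ae_comp_linearMap_mem_iff L volume volume hL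
    isClosed_setOf_aligned.measurableSet.compl).mpr (ae_not_aligned hT)

theorem ae_not_aligned_slopeJumps (hT : 2 ≤ T) (σ : Equiv.Perm (Fin N)) {i : ℕ} (hi : 1 ≤ i)
    (hiN : i + 3 ≤ N) :
    ∀ᵐ p : (Fin N → ℝ) × (Fin N → EuclideanSpace ℝ (Fin T)),
      ¬ Aligned (slopeJumps (extR N (p.1 ∘ σ)) (extV N (p.2 ∘ σ)) i).1
        (slopeJumps (extR N (p.1 ∘ σ)) (extV N (p.2 ∘ σ)) i).2 := by
  have hR (k : ℕ) : Measurable fun p : (Fin N → ℝ) × (Fin N → EuclideanSpace ℝ (Fin T)) =>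
      extR N (p.1 ∘ σ) k := (measurable_extR k).comp (by fun_prop)
  have hV (k : ℕ) : Measurable fun p : (Fin N → ℝ) × (Fin N → EuclideanSpace ℝ (Fin T)) =>
      extV N (p.2 ∘ σ) k := (measurable_extV k).comp (by fun_prop)
  have hJ : Measurable fun p : (Fin N → ℝ) × (Fin N → EuclideanSpace ℝ (Fin T)) =>
      slopeJumps (extR N (p.1 ∘ σ)) (extV N (p.2 ∘ σ)) i := by
    unfold slopeJumps slopeVec
    fun_prop
  rw [volume_eq_prod]
  refine (ae_prod_mem_iff_ae_ae_mem (isClosed_setOf_aligned.measurableSet.compl.preimage hJ)).mpr ?_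
  filter_upwards [ae_injective (ι := Fin N) volume] with x hx
  exact ae_not_aligned_slopeJumps_of_injective hT hx σ hi hiN

end Measure

theorem bad_datasets_measure_zero_general (T N : ℕ) (hT : 2 ≤ T) :
    MeasureTheory.volume
      {p : (Fin N → ℝ) × (Fin N → EuclideanSpace ℝ (Fin T)) |
        (¬ Function.Injective p.1) ∨
        ∃ σ : Equiv.Perm (Fin N), StrictMono (p.1 ∘ σ) ∧
          ∃ i : ℕ, 1 ≤ i ∧ i + 3 ≤ N ∧
            slopeVec (extR N (p.1 ∘ σ)) (extV N (p.2 ∘ σ)) i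
              - slopeVec (extR N (p.1 ∘ σ)) (extV N (p.2 ∘ σ)) (i - 1) ≠ 0 ∧
            slopeVec (extR N (p.1 ∘ σ)) (extV N (p.2 ∘ σ)) (i + 1)
              - slopeVec (extR N (p.1 ∘ σ)) (extV N (p.2 ∘ σ)) i ≠ 0 ∧
            Aligned
              (slopeVec (extR N (p.1 ∘ σ)) (extV N (p.2 ∘ σ)) i
                - slopeVec (extR N (p.1 ∘ σ)) (extV N (p.2 ∘ σ)) (i - 1))
              (slopeVec (extR N (p.1 ∘ σ)) (extV N (p.2 ∘ σ)) (i + 1)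
                - slopeVec (extR N (p.1 ∘ σ)) (extV N (p.2 ∘ σ)) i)} = 0 := by
  have hinj : ∀ᵐ p : (Fin N → ℝ) × (Fin N → EuclideanSpace ℝ (Fin T)), Function.Injective p.1 := by
    rw [volume_eq_prod]
    exact quasiMeasurePreserving_fst.ae (ae_injective (ι := Fin N) volume)
  have hal : ∀ᵐ p : (Fin N → ℝ) × (Fin N → EuclideanSpace ℝ (Fin T)),
      ∀ (σ : Equiv.Perm (Fin N)) (i : ℕ), 1 ≤ i → i + 3 ≤ N →
        ¬ Aligned (slopeJumps (extR N (p.1 ∘ σ)) (extV N (p.2 ∘ σ)) i).1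
          (slopeJumps (extR N (p.1 ∘ σ)) (extV N (p.2 ∘ σ)) i).2 :=
    ae_all_iff.mpr fun σ => ae_all_iff.mpr fun i =>
      Filter.eventually_imp_distrib_left.mpr fun hi => Filter.eventually_imp_distrib_left.mpr
        fun hiN => ae_not_aligned_slopeJumps hT σ hi hiN
  refine measure_eq_zero_iff_ae_notMem.mpr ?_
  filter_upwards [hinj, hal] with p hp hp'
  rintro (hn | ⟨σ, -, i, hi, hiN, -, -, haligned⟩)
  exacts [hn hp, hp' σ i hi hiN haligned]

/-- The set of data configurations
`(x, Y) ∈ ℝ^N × ℝ^{T×N}` such that either the `xᵢ` are not pairwise distinct,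
or, after reindexing so that `x₁ < ⋯ < x_N`, for some (1-indexed)
`i ∈ {2, …, N−2}` the vectors `sᵢ − s_{i−1}` and `s_{i+1} − sᵢ` are both nonzero
and aligned, has Lebesgue measure zero. -/
theorem bad_datasets_measure_zero (T N : ℕ) (hT : 2 ≤ T) (hN : 2 ≤ N) :
    MeasureTheory.volume
      {p : (Fin N → ℝ) × (Fin N → EuclideanSpace ℝ (Fin T)) |
        (¬ Function.Injective p.1) ∨
        ∃ σ : Equiv.Perm (Fin N), StrictMono (p.1 ∘ σ) ∧
          ∃ i : ℕ, 1 ≤ i ∧ i + 3 ≤ N ∧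
            slopeVec (extR N (p.1 ∘ σ)) (extV N (p.2 ∘ σ)) i
              - slopeVec (extR N (p.1 ∘ σ)) (extV N (p.2 ∘ σ)) (i - 1) ≠ 0 ∧
            slopeVec (extR N (p.1 ∘ σ)) (extV N (p.2 ∘ σ)) (i + 1)
              - slopeVec (extR N (p.1 ∘ σ)) (extV N (p.2 ∘ σ)) i ≠ 0 ∧
            Aligned
              (slopeVec (extR N (p.1 ∘ σ)) (extV N (p.2 ∘ σ)) i
                - slopeVec (extR N (p.1 ∘ σ)) (extV N (p.2 ∘ σ)) (i - 1))
              (slopeVec (extR N (p.1 ∘ σ)) (extV N (p.2 ∘ σ)) (i + 1)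
                - slopeVec (extR N (p.1 ∘ σ)) (extV N (p.2 ∘ σ)) i)} = 0 :=
  bad_datasets_measure_zero_general T N hT

end
end
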